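/- arXiv:2310.07524 — 10 statements merged into one kernel-verified Lean document; each statement's English description precedes it below -/
import Mathlib

section
/- Let K be a field, n a positive integer, ξ ∈ K a primitive n-th root of unity, η ∈ K a nonzero element, S a subset of {0,1,…,n−1}, and d a positive integer. Suppose that every nonzero vector u : Fin n → K satisfying ∑_{l=0}^{n−1} u_l ξ^{i·l} = 0 for all i ∈ S has Hamming weight at least d. Then every nonzero vector c : Fin n → K satisfying ∑_{l=0}^{n−1} c_l η^l ξ^{i·l} = 0 for all i ∈ S also has Hamming weight at least d. -/
/-!
`c` lies in the constacyclic code exactly when `l ↦ c l * η ^ l` lies in the cyclic one, and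
multiplying coordinates by the nonzero scalars `η ^ l` preserves the support.
-/

theorem hammingNorm_mul_of_ne_zero {ι K : Type*} [Fintype ι] [MulZeroClass K]
    [IsRightCancelMulZero K] [DecidableEq K]
    (c w : ι → K) (hw : ∀ i, w i ≠ 0) : hammingNorm (c * w) = hammingNorm c :=
  hammingNorm_comp (fun i x => x * w i) (fun i => mul_left_injective₀ (hw i))
    (fun _ => zero_mul _)

theorem constacyclic_distance_lower_bound_general
    {K : Type*} [Field K] [DecidableEq K] (n : ℕ)
    (ξ η : K) (hη : η ≠ 0)
    (S : Finset ℕ) (d : ℕ)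
    (h : ∀ u : Fin n → K, u ≠ 0 →
      (∀ i ∈ S, ∑ l : Fin n, u l * ξ ^ (i * (l : ℕ)) = 0) → d ≤ hammingNorm u) :
    ∀ c : Fin n → K, c ≠ 0 →
      (∀ i ∈ S, ∑ l : Fin n, c l * η ^ (l : ℕ) * ξ ^ (i * (l : ℕ)) = 0) →
      d ≤ hammingNorm c := by
  intro c hc hsum
  have hw : ∀ l : Fin n, η ^ (l : ℕ) ≠ 0 := fun l => pow_ne_zero _ hη
  have hweight := hammingNorm_mul_of_ne_zero c _ hw
  have hu : c * (fun l : Fin n => η ^ (l : ℕ)) ≠ 0 := by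
    rwa [← hammingNorm_ne_zero_iff, hweight, hammingNorm_ne_zero_iff]
  exact hweight ▸ h _ hu hsum

/-- Proposition 1: the minimum-distance lower bound for a cyclic code with defining
set `S` transfers to the corresponding constacyclic code. -/
theorem constacyclic_distance_lower_bound
    {K : Type*} [Field K] [DecidableEq K] (n : ℕ) (hn : 0 < n)
    (ξ η : K) (hξ : IsPrimitiveRoot ξ n) (hη : η ≠ 0)
    (S : Finset ℕ) (hS : S ⊆ Finset.range n) (d : ℕ) (hd : 0 < d)
    (h : ∀ u : Fin n → K, u ≠ 0 →
      (∀ i ∈ S, ∑ l : Fin n, u l * ξ ^ (i * (l : ℕ)) = 0) → d ≤ hammingNorm u) :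
    ∀ c : Fin n → K, c ≠ 0 →
      (∀ i ∈ S, ∑ l : Fin n, c l * η ^ (l : ℕ) * ξ ^ (i * (l : ℕ)) = 0) →
      d ≤ hammingNorm c :=
  constacyclic_distance_lower_bound_general n ξ η hη S d h
end

section
/- Let K be a field, n a positive integer, and ξ ∈ K a primitive n-th root of unity. For c : Fin n → K define its discrete Fourier transform A : Fin n → K by A_i = ∑_{j=0}^{n−1} c_j ξ^{i·j}. Then the Hamming weight of c equals the rank of the n×n matrix M(A) whose (i,j) entry is A_{(j−i) mod n} (the circulant matrix whose first row is A and whose subsequent rows are its successive cyclic shifts). -/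
/-!
Write `A` for the discrete Fourier transform of `c` with respect to `ξ`. Since
`ξ ^ ((j - i) l) = ξ ^ (j l) / ξ ^ (i l)`, the matrix `(A (j - i))ᵢⱼ` factors as
`V(ξ⁻¹) * diagonal c * V(ξ)`, where `V(ζ)` is the Vandermonde matrix on the nodes `ζ ^ i`.
The nodes `ξ ^ i, i < n`, are pairwise distinct, so both Vandermonde factors are invertible
and the rank equals that of `diagonal c`, which is the number of nonzero entries of `c`.
-/

open Matrix

def Fin.dft {R : Type*} [CommSemiring R] {n : ℕ} (ζ : R) (c : Fin n → R) (k : Fin n) : R :=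
  ∑ l : Fin n, c l * ζ ^ ((k : ℕ) * (l : ℕ))

namespace IsPrimitiveRoot

theorem pow_val_sub_mul_mul_pow {M : Type*} [CommMonoid M] {ζ : M} {n : ℕ}
    (h : IsPrimitiveRoot ζ n) (i j : Fin n) (l : ℕ) :
    ζ ^ (((j - i : Fin n) : ℕ) * l) * ζ ^ ((i : ℕ) * l) = ζ ^ ((j : ℕ) * l) := by
  have : NeZero n := ⟨i.pos.ne'⟩
  rw [← pow_add, ← add_mul]
  refine pow_eq_pow_of_modEq (Nat.ModEq.mul_right l ?_) h.pow_eq_one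
  change _ % n = _ % n
  rw [← Fin.val_add, sub_add_cancel, Nat.mod_eq_of_lt j.isLt]

variable {K : Type*} [Field K] {ζ : K} {n : ℕ}

theorem isUnit_det_vandermonde_pow (h : IsPrimitiveRoot ζ n) :
    IsUnit (vandermonde fun i : Fin n => ζ ^ (i : ℕ)).det :=
  isUnit_iff_ne_zero.2 <| det_vandermonde_ne_zero_iff.2 fun i j hij =>
    Fin.ext (h.pow_inj i.isLt j.isLt hij)

theorem of_dft_sub_eq_vandermonde_mul_diagonal_mul (h : IsPrimitiveRoot ζ n) (c : Fin n → K) :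
    Matrix.of (fun i j : Fin n => Fin.dft ζ c (j - i)) =
      vandermonde (fun i : Fin n => ζ⁻¹ ^ (i : ℕ)) * diagonal c *
        vandermonde (fun i : Fin n => ζ ^ (i : ℕ)) := by
  ext i j
  rw [mul_apply]
  simp only [of_apply, Fin.dft, mul_diagonal, vandermonde_apply]
  refine Finset.sum_congr rfl fun l _ => ?_
  have hζ : ζ ^ ((i : ℕ) * l) ≠ 0 := pow_ne_zero _ (h.ne_zero i.pos.ne')
  rw [eq_div_of_mul_eq hζ (h.pow_val_sub_mul_mul_pow i j l), ← pow_mul, ← pow_mul, inv_pow,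
    Nat.mul_comm (l : ℕ) j]
  ring

end IsPrimitiveRoot

theorem blahut_weight_eq_rank_circulant_general
    {K : Type*} [Field K] [DecidableEq K] (n : ℕ)
    (ξ : K) (hξ : IsPrimitiveRoot ξ n) (c : Fin n → K) :
    hammingNorm c =
      Matrix.rank (Matrix.of fun i j : Fin n =>
        ∑ l : Fin n, c l * ξ ^ ((((j - i : Fin n) : ℕ)) * (l : ℕ))) := by
  change hammingNorm c = (Matrix.of fun i j : Fin n => Fin.dft ξ c (j - i)).rank
  rw [hξ.of_dft_sub_eq_vandermonde_mul_diagonal_mul c,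
    rank_mul_eq_left_of_isUnit_det _ _ hξ.isUnit_det_vandermonde_pow,
    rank_mul_eq_right_of_isUnit_det _ _ hξ.inv.isUnit_det_vandermonde_pow, rank_diagonal,
    hammingNorm, Fintype.card_subtype]

/-- Blahut's theorem: the Hamming weight of `c` equals the rank of the circulant
matrix built from the discrete Fourier transform of `c`. -/
theorem blahut_weight_eq_rank_circulant
    {K : Type*} [Field K] [DecidableEq K] (n : ℕ) (hn : 0 < n)
    (ξ : K) (hξ : IsPrimitiveRoot ξ n) (c : Fin n → K) :
    hammingNorm c =
      Matrix.rank (Matrix.of fun i j : Fin n =>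
        ∑ l : Fin n, c l * ξ ^ ((((j - i : Fin n) : ℕ)) * (l : ℕ))) :=
  blahut_weight_eq_rank_circulant_general n ξ hξ c
end

section
/- Let F be a finite field with q elements and K a field extension of F. Let r ≥ 1 and δ ≥ 2 be integers, n a positive integer with gcd(n,q) = 1 and (r+δ−1) | n, and set ρ = n/(r+δ−1). Let ξ ∈ K be a primitive n-th root of unity and η ∈ K a nonzero element with η^n = λ for some nonzero λ ∈ F. Suppose there exist an integer ε₀ and a positive integer t with gcd(t, r+δ−1) = 1. Define C = { c : Fin n → F : ∑_{l=0}^{n−1} c_l (η ξ^{ε₀ + t·i + j·(r+δ−1)})^l = 0 for all 0 ≤ i ≤ δ−2 and 0 ≤ j ≤ ρ−1 }. Then C has (r,δ)-locality. -/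
/-- A code `C ⊆ F^n` has `(r,δ)`-locality if each coordinate has a repair set `S`
of size at most `r+δ-1` such that any codeword that is nonzero somewhere in `S`
has at least `δ` nonzero coordinates inside `S`. -/
def HasRDeltaLocality {F : Type*} [Field F] [DecidableEq F] {n : ℕ}
    (C : Set (Fin n → F)) (r δ : ℕ) : Prop :=
  ∀ ℓ : Fin n, ∃ S : Finset (Fin n), ℓ ∈ S ∧ S.card ≤ r + δ - 1 ∧
    ∀ c ∈ C, (∃ i ∈ S, c i ≠ 0) → δ ≤ (S.filter fun i => c i ≠ 0).card

/-!
Write `m = r + δ - 1` and `n = m ρ`. The repair sets are the residue classes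
`{b + ρ k | k < m}` modulo `ρ`. For fixed `i`, the `ρ` evaluation points
`y_j = η ξ ^ (ε₀ + t i) (ξ ^ m) ^ j` are distinct and share the `ρ`-th power
`A w ^ i`, where `A = η ^ ρ ξ ^ (ε₀ ρ)` and `w = ξ ^ (ρ t)` is a primitive `m`-th root
of unity. Splitting `∑ c_l y_j ^ l` along the residue classes and inverting the
Vandermonde matrix in the `y_j` shows that on every class `∑_k c_(b+ρk) A^k (w^k)^i = 0`
for all `i < δ - 1`. By the BCH bound, a nonzero restriction of a codeword to a class
then has at least `δ` nonzero entries.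
-/

open Finset Function

theorem eq_zero_of_sum_mul_pow_eq_zero_of_card_le {ι R : Type*} [Fintype ι] [CommRing R]
    [IsDomain R] {x v : ι → R} (hx : Injective x) {d : ℕ}
    (h : ∀ i < d, ∑ k, v k * x k ^ i = 0) {T : Finset ι} (hTd : #T ≤ d)
    (hvT : ∀ k ∉ T, v k = 0) : v = 0 := by
  let e : Fin #T ≃ T := T.equivFin.symm
  have hvT_zero : (fun j => v (e j)) = 0 := by
    refine Matrix.eq_zero_of_forall_pow_sum_mul_pow_eq_zero
      (hx.comp (Subtype.val_injective.comp e.injective)) fun i => ?_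
    simp only [comp_apply]
    rw [e.sum_comp (fun k : T => v k * x k ^ (i : ℕ)),
      T.sum_coe_sort (fun k => v k * x k ^ (i : ℕ)),
      sum_subset T.subset_univ fun k _ hk => by rw [hvT k hk, zero_mul]]
    exact h i (i.2.trans_le hTd)
  funext k
  by_cases hk : k ∈ T
  · simpa [e] using congrFun hvT_zero (e.symm ⟨k, hk⟩)
  · exact hvT k hk

theorem lt_card_filter_ne_zero_of_sum_mul_pow_eq_zero {F K : Type*} [Field F] [DecidableEq F]
    [Field K] [Algebra F K] {m d : ℕ} {w A : K} (hw : IsPrimitiveRoot w m) (hA : A ≠ 0)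
    {u : Fin m → F} (hu : u ≠ 0)
    (h : ∀ i < d, ∑ k, algebraMap F K (u k) * (A * w ^ i) ^ (k : ℕ) = 0) :
    d < #{k | u k ≠ 0} := by
  by_contra! hcard
  refine hu (funext fun k => ?_)
  have hv := eq_zero_of_sum_mul_pow_eq_zero_of_card_le
    (x := fun k : Fin m => w ^ (k : ℕ)) (v := fun k => algebraMap F K (u k) * A ^ (k : ℕ))
    (fun a b hab => Fin.ext (hw.pow_inj a.2 b.2 hab))
    (fun i hi => by simpa [mul_pow, ← pow_mul, mul_comm, mul_assoc] using h i hi) hcard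
    (fun k hk => by simp_all)
  simpa [hA] using congrFun hv k

theorem sum_mul_pow_eq_sum_finProdFinEquiv {R : Type*} [CommSemiring R] {m ρ : ℕ}
    (c : Fin (m * ρ) → R) (y : R) :
    ∑ l, c l * y ^ (l : ℕ) =
      ∑ b : Fin ρ, (∑ k : Fin m, c (finProdFinEquiv (k, b)) * (y ^ ρ) ^ (k : ℕ)) *
        y ^ (b : ℕ) := by
  rw [← finProdFinEquiv.sum_comp, Fintype.sum_prod_type, sum_comm]
  simp only [sum_mul, finProdFinEquiv_apply_val, pow_add, pow_mul]
  exact sum_congr rfl fun b _ => sum_congr rfl fun k _ => by ring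

theorem sum_finProdFinEquiv_mul_pow_eq_zero {R : Type*} [CommRing R] [IsDomain R] {m ρ : ℕ}
    {ζ y₀ : R} (hζ : IsPrimitiveRoot ζ ρ) (hy₀ : y₀ ≠ 0) {c : Fin (m * ρ) → R}
    (h : ∀ j : Fin ρ, ∑ l, c l * (y₀ * ζ ^ (j : ℕ)) ^ (l : ℕ) = 0) (b : Fin ρ) :
    ∑ k : Fin m, c (finProdFinEquiv (k, b)) * (y₀ ^ ρ) ^ (k : ℕ) = 0 := by
  have hinj : Injective fun j : Fin ρ => y₀ * ζ ^ (j : ℕ) := fun a b hab =>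
    Fin.ext (hζ.pow_inj a.2 b.2 (mul_left_cancel₀ hy₀ hab))
  suffices hcoset : (fun b : Fin ρ =>
      ∑ k : Fin m, c (finProdFinEquiv (k, b)) * (y₀ ^ ρ) ^ (k : ℕ)) = 0 from
    congrFun hcoset b
  refine Matrix.eq_zero_of_forall_index_sum_mul_pow_eq_zero hinj fun j => ?_
  have hpow : (y₀ * ζ ^ (j : ℕ)) ^ ρ = y₀ ^ ρ := by
    rw [mul_pow, ← pow_mul, mul_comm (j : ℕ), pow_mul, hζ.pow_eq_one, one_pow, mul_one]
  rw [← h j, sum_mul_pow_eq_sum_finProdFinEquiv, hpow]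

theorem sum_finProdFinEquiv_eq_zero_of_constacyclic_zeros {K : Type*} [Field K] {m ρ t i : ℕ}
    {ξ η : K} {ε₀ : ℤ} (hξ : IsPrimitiveRoot ξ (m * ρ)) (hmρ : 0 < m * ρ) (hη : η ≠ 0)
    {c : Fin (m * ρ) → K}
    (hc : ∀ j : Fin ρ, ∑ l, c l * (η * ξ ^ (ε₀ + t * i + (j : ℕ) * m)) ^ (l : ℕ) = 0)
    (b : Fin ρ) :
    ∑ k : Fin m, c (finProdFinEquiv (k, b)) * (η ^ ρ * ξ ^ (ε₀ * ρ) * (ξ ^ (ρ * t)) ^ i) ^ (k : ℕ)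
      = 0 := by
  have hξ0 : ξ ≠ 0 := hξ.ne_zero hmρ.ne'
  have hpow : (η * ξ ^ (ε₀ + t * i)) ^ ρ = η ^ ρ * ξ ^ (ε₀ * ρ) * (ξ ^ (ρ * t)) ^ i := by
    rw [mul_pow, ← zpow_natCast (ξ ^ _), ← zpow_mul, ← pow_mul, ← zpow_natCast ξ, mul_assoc,
      ← zpow_add₀ hξ0]
    congr 2
    push_cast
    ring
  have hpoint (j : ℕ) : η * ξ ^ (ε₀ + t * i + j * m) = η * ξ ^ (ε₀ + t * i) * (ξ ^ m) ^ j := by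
    rw [zpow_add₀ hξ0, mul_comm (j : ℤ), zpow_mul, zpow_natCast, zpow_natCast, mul_assoc]
  rw [← hpow]
  exact sum_finProdFinEquiv_mul_pow_eq_zero (hξ.pow hmρ rfl)
    (mul_ne_zero hη (zpow_ne_zero _ hξ0)) (by simpa only [hpoint] using hc) b

/-- `{b + ρ k | k < m}`, since `finProdFinEquiv (k, b) = b + ρ k`. -/
def residueClass (m ρ : ℕ) (b : Fin ρ) : Finset (Fin (m * ρ)) :=
  univ.map ((Embedding.sectL (Fin m) b).trans finProdFinEquiv.toEmbedding)

theorem mem_residueClass_symm_snd {m ρ : ℕ} (ℓ : Fin (m * ρ)) :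
    ℓ ∈ residueClass m ρ (finProdFinEquiv.symm ℓ).2 :=
  mem_map.2 ⟨(finProdFinEquiv.symm ℓ).1, mem_univ _, finProdFinEquiv.apply_symm_apply ℓ⟩

theorem card_residueClass (m ρ : ℕ) (b : Fin ρ) : #(residueClass m ρ b) = m := by
  simp [residueClass]

theorem card_filter_residueClass {m ρ : ℕ} (b : Fin ρ) (p : Fin (m * ρ) → Prop)
    [DecidablePred p] :
    #{l ∈ residueClass m ρ b | p l} = #{k : Fin m | p (finProdFinEquiv (k, b))} := by
  rw [residueClass, filter_map, card_map]
  rfl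

theorem ne_zero_of_exists_mem_residueClass {M : Type*} [Zero M] {m ρ : ℕ} {b : Fin ρ}
    {c : Fin (m * ρ) → M} (h : ∃ l ∈ residueClass m ρ b, c l ≠ 0) :
    (fun k : Fin m => c (finProdFinEquiv (k, b))) ≠ 0 := by
  obtain ⟨_, hl, hcl⟩ := h
  obtain ⟨k, -, rfl⟩ := mem_map.1 hl
  exact fun hc => hcl (congrFun hc k)

theorem constacyclic_has_locality_general
    {F K : Type*} [Field F] [DecidableEq F] [Field K] [Algebra F K]
    (r δ n : ℕ) (hdvd : (r + δ - 1) ∣ n)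
    (ρ : ℕ) (hρ : ρ = n / (r + δ - 1))
    (ξ η : K) (hξ : IsPrimitiveRoot ξ n) (hη : η ≠ 0)
    (ε₀ : ℤ) (t : ℕ) (htc : Nat.gcd t (r + δ - 1) = 1) :
    HasRDeltaLocality
      {c : Fin n → F | ∀ i ≤ δ - 2, ∀ j ≤ ρ - 1,
        ∑ l : Fin n, algebraMap F K (c l) *
          (η * ξ ^ (ε₀ + (t : ℤ) * i + (j : ℤ) * (r + δ - 1))) ^ (l : ℕ) = 0}
      r δ := by
  intro ℓ
  obtain ⟨ρ', rfl⟩ := hdvd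
  have hm : 0 < r + δ - 1 := Nat.pos_of_mul_pos_right ℓ.pos
  obtain rfl : ρ = ρ' := hρ.trans (Nat.mul_div_cancel_left ρ' hm)
  have hm_cast : (r : ℤ) + δ - 1 = ((r + δ - 1 : ℕ) : ℤ) := by omega
  generalize r + δ - 1 = m at *
  have hw : IsPrimitiveRoot (ξ ^ (ρ * t)) m := by
    rw [pow_mul]
    exact (hξ.pow ℓ.pos (mul_comm m ρ)).pow_of_coprime t htc
  have hA : η ^ ρ * ξ ^ (ε₀ * ρ) ≠ 0 :=
    mul_ne_zero (pow_ne_zero _ hη) (zpow_ne_zero _ (hξ.ne_zero ℓ.pos.ne'))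
  refine ⟨residueClass m ρ (finProdFinEquiv.symm ℓ).2, mem_residueClass_symm_snd ℓ,
    (card_residueClass m ρ _).le, fun c hc hne => ?_⟩
  rw [card_filter_residueClass]
  refine Nat.le_of_pred_lt (lt_card_filter_ne_zero_of_sum_mul_pow_eq_zero (d := δ - 1) hw hA
    (ne_zero_of_exists_mem_residueClass hne) fun i hi => ?_)
  refine sum_finProdFinEquiv_eq_zero_of_constacyclic_zeros (c := fun l => algebraMap F K (c l))
    hξ ℓ.pos hη (fun j => ?_) _
  simpa only [hm_cast] using hc i (by omega) j (by omega)

/-- Lemma 2 of the paper: a (consta)cyclic code whose generator polynomial vanishes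
at `η ξ^{ε₀ + t i + j (r+δ-1)}` for all `0 ≤ i ≤ δ-2`, `0 ≤ j ≤ ρ-1` has
`(r,δ)`-locality. -/
theorem constacyclic_has_locality
    {F K : Type*} [Field F] [Fintype F] [DecidableEq F] [Field K] [Algebra F K]
    (q r δ n : ℕ) (hq : Fintype.card F = q) (hr : 1 ≤ r) (hδ : 2 ≤ δ)
    (hn : 0 < n) (hgcd : Nat.gcd n q = 1) (hdvd : (r + δ - 1) ∣ n)
    (ρ : ℕ) (hρ : ρ = n / (r + δ - 1))
    (ξ η : K) (hξ : IsPrimitiveRoot ξ n) (hη : η ≠ 0)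
    (lam : F) (hlam : lam ≠ 0) (hηn : η ^ n = algebraMap F K lam)
    (ε₀ : ℤ) (t : ℕ) (ht : 0 < t) (htc : Nat.gcd t (r + δ - 1) = 1) :
    HasRDeltaLocality
      {c : Fin n → F | ∀ i ≤ δ - 2, ∀ j ≤ ρ - 1,
        ∑ l : Fin n, algebraMap F K (c l) *
          (η * ξ ^ (ε₀ + (t : ℤ) * i + (j : ℤ) * (r + δ - 1))) ^ (l : ℕ) = 0}
      r δ :=
  constacyclic_has_locality_general r δ n hdvd ρ hρ ξ η hξ hη ε₀ t htc
end

section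
/- Let δ ≥ 2 and s ≥ 1 be integers and let t_1,…,t_s be integers with 1 ≤ t_i ≤ δ−1 for all i. Assume that for all indices with 1 ≤ i ≤ s−1 and i+1 ≤ j ≤ k ≤ s and j + k = s + i + 1, one has t_j + t_k ≤ t_i + 1. Let K be a field, n an integer with n ≥ (2s+1)δ + t_1 − 1, ξ ∈ K a primitive n-th root of unity, and i₀ an integer. Set B = sδ + t_1 − 1. Let c : Fin n → K be nonzero and suppose that ∑_{l=0}^{n−1} c_l ξ^{(i₀+e)·l} = 0 for every e in Z := {0,…,B−1} ∪ {B+1,…,B+δ−1} ∪ ⋃_{h=1}^{s} {B + hδ + t_{s+1−h}, …, B + (h+1)δ − 1}. Then the Hamming weight of c is at least (s+1)δ. -/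
/-
Write `∑ₗ cₗ ξ ^ ((i₀ + e) l)` as a weighted power sum `S e = ∑ₗ bₗ vₗ ^ e` over the distinct nodes
`vₗ = ξ ^ l`. If the weight `w` of `b` is below `(s + 1) δ`, every `e < w` other than the pivot `B`
lies in `Z`, so once `S B = 0` the Vandermonde determinant forces `b = 0`. The sequence `S`
satisfies a linear recurrence of order `w` whose coefficients `q` are those of `∏ (1 - vₗ X)`, with
`q w ≠ 0`. If `S B ≠ 0`, the recurrence read at `B + m` isolates `q m * S B`, and an induction over
the blocks of the pattern kills `q m` on a window of each block; the superadditivity of the gap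
lengths, which is what the system of inequalities says, makes the windows fit together, and the
last window contains `m = w`.
-/

open Finset Polynomial

section PowerSum

variable {ι K : Type*} [Fintype ι] [Field K]

def weightedPowerSum (b v : ι → K) (k : ℕ) : K := ∑ i, b i * v i ^ k

theorem sum_coeff_mul_weightedPowerSum (b v : ι → K) (Q : K[X]) (e : ℕ) :
    ∑ j ∈ range (Q.natDegree + 1), Q.coeff j * weightedPowerSum b v (e + j) =
      ∑ i, b i * v i ^ e * Q.eval (v i) := by
  simp only [weightedPowerSum, eval_eq_sum_range, mul_sum, pow_add]
  rw [sum_comm]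
  refine sum_congr rfl fun i _ => sum_congr rfl fun j _ => ?_
  ring

variable [DecidableEq K]

theorem exists_linearRecurrence_weightedPowerSum (b v : ι → K) (hv : ∀ i, b i ≠ 0 → v i ≠ 0) :
    ∃ q : ℕ → K, q (hammingNorm b) ≠ 0 ∧ ∀ e, hammingNorm b ≤ e →
      ∑ j ∈ range (hammingNorm b + 1), q j * weightedPowerSum b v (e - j) = 0 := by
  set w := hammingNorm b
  set Q : K[X] := ∏ i ∈ {i | b i ≠ 0}, (X - C (v i))
  have hdeg : Q.natDegree = w := natDegree_finsetProd_X_sub_C_eq_card _ _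
  refine ⟨fun j => Q.coeff (w - j), ?_, fun e he => ?_⟩
  · simp only [Nat.sub_self, coeff_zero_eq_eval_zero, Q, eval_prod, eval_sub, eval_X, eval_C,
      zero_sub, prod_ne_zero_iff, neg_ne_zero]
    intro i hi
    exact hv i (mem_filter.mp hi).2
  · rw [← sum_range_reflect]
    calc _ = ∑ j ∈ range (Q.natDegree + 1), Q.coeff j * weightedPowerSum b v (e - w + j) := by
          rw [hdeg]
          refine sum_congr rfl fun j hj => ?_
          have := mem_range.mp hj
          dsimp only
          congr 2 <;> omega
      _ = 0 := by
          rw [sum_coeff_mul_weightedPowerSum]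
          refine sum_eq_zero fun i _ => ?_
          by_cases hb : b i = 0
          · simp [hb]
          · have : Q.eval (v i) = 0 := by
              simp only [Q, eval_prod]
              exact prod_eq_zero (mem_filter.mpr ⟨mem_univ i, hb⟩) (by simp)
            rw [this, mul_zero]

theorem eq_zero_of_weightedPowerSum_eq_zero {b v : ι → K} (hv : Function.Injective v)
    (h : ∀ k < hammingNorm b, weightedPowerSum b v k = 0) : b = 0 := by
  set T : Finset ι := {i | b i ≠ 0}
  have hT : ∀ k : Fin #T, ∑ j, b (T.equivFin.symm j) * v (T.equivFin.symm j) ^ (k : ℕ) = 0 := by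
    intro k
    rw [Equiv.sum_comp T.equivFin.symm (fun i => b i * v i ^ (k : ℕ)),
      sum_coe_sort T fun i => b i * v i ^ (k : ℕ),
      sum_filter_of_ne fun i _ hi => left_ne_zero_of_mul hi]
    exact h k k.is_lt
  have hzero := Matrix.eq_zero_of_forall_pow_sum_mul_pow_eq_zero
    (hv.comp (Subtype.val_injective.comp T.equivFin.symm.injective)) hT
  funext i
  by_contra hi
  exact hi (by simpa using congrFun hzero (T.equivFin ⟨i, by simpa [T] using hi⟩))

end PowerSum

section GapPattern

variable {K : Type*} [Field K] {q S : ℕ → K} {w B δ s : ℕ} {a : ℕ → ℕ}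

theorem coeff_eq_zero_of_linearRecurrence
    (hrec : ∀ e, w ≤ e → ∑ j ∈ range (w + 1), q j * S (e - j) = 0)
    (hbelow : ∀ e < B, S e = 0) (hB : S B ≠ 0) {m : ℕ} (hmw : m ≤ w) (hm : w ≤ B + m)
    (hprev : ∀ j < m, q j = 0 ∨ S (B + (m - j)) = 0) : q m = 0 := by
  have hsingle : ∑ j ∈ range (w + 1), q j * S (B + m - j) = q m * S (B + m - m) := by
    refine sum_eq_single_of_mem m (mem_range.mpr (Nat.lt_succ_of_le hmw)) fun j hj hjm => ?_
    rcases Nat.lt_or_gt_of_ne hjm with hlt | hgt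
    · rcases hprev j hlt with h | h
      · rw [h, zero_mul]
      · rw [show B + m - j = B + (m - j) by omega, h, mul_zero]
    · rw [hbelow _ (by have := mem_range.mp hj; omega), mul_zero]
  have := hrec (B + m) hm
  rw [hsingle, Nat.add_sub_cancel] at this
  exact (mul_eq_zero.mp this).resolve_right hB

theorem exists_block_free_or_gap (hδ : 0 < δ) (ha0 : a 0 = 0) {k g : ℕ} (hk : 0 < k)
    (hkg : k < (g + 1) * δ) :
    (∃ h ≤ g, 1 ≤ h ∧ h * δ ≤ k ∧ k ≤ h * δ + a h) ∨
      ∃ h ≤ g, h * δ + a h < k ∧ k < (h + 1) * δ := by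
  have hlo : k / δ * δ ≤ k := Nat.div_mul_le_self k δ
  have hhi : k < (k / δ + 1) * δ := by rw [mul_comm]; exact Nat.lt_mul_div_succ k hδ
  have hg : k / δ ≤ g := Nat.lt_succ_iff.mp ((Nat.div_lt_iff_lt_mul hδ).mpr hkg)
  by_cases hfree : k ≤ k / δ * δ + a (k / δ)
  · refine Or.inl ⟨k / δ, hg, Nat.one_le_iff_ne_zero.mpr fun h0 => ?_, hlo, hfree⟩
    rw [h0, ha0] at hfree
    omega
  · exact Or.inr ⟨k / δ, hg, by omega, hhi⟩

theorem coeff_eq_zero_of_gap_pattern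
    (hrec : ∀ e, w ≤ e → ∑ j ∈ range (w + 1), q j * S (e - j) = 0)
    (hbelow : ∀ e < B, S e = 0) (hB : S B ≠ 0)
    (hgap : ∀ h ≤ s, ∀ k, h * δ + a h < k → k < (h + 1) * δ → S (B + k) = 0)
    (hδ : 0 < δ) (ha0 : a 0 = 0) (hsup : ∀ i j, i + j ≤ s → a i + a j ≤ a (i + j)) :
    ∀ g ≤ s, ∀ m ≤ w, g * δ + (w - B) + a g ≤ m → m < (g + 1) * δ → q m = 0 := by
  intro g
  induction g using Nat.strong_induction_on with
  | _ g ih =>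
  intro hgs m hmw hlo hhi
  refine coeff_eq_zero_of_linearRecurrence hrec hbelow hB hmw (by omega) fun j hj => ?_
  rcases exists_block_free_or_gap hδ ha0 (k := m - j) (g := g) (by omega) (by omega) with
    ⟨h, hhg, hh1, hk1, hk2⟩ | ⟨h, hhg, hk1, hk2⟩
  · -- A free offset `m - j` in block `h` forces `j` into block `g - h`, by superadditivity.
    have hsplit : (g - h) * δ + h * δ = g * δ := by rw [← add_mul, Nat.sub_add_cancel hhg]
    have hnext : (g - h + 1) * δ = (g - h) * δ + δ := by ring
    have hgd : (g + 1) * δ = g * δ + δ := by ring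
    have := hsup h (g - h) (by omega)
    rw [Nat.add_sub_cancel' hhg] at this
    exact Or.inl (ih (g - h) (by omega) (by omega) j (by omega) (by omega) (by omega))
  · exact Or.inr (hgap h (by omega) _ hk1 hk2)

theorem eq_zero_of_gap_pattern
    (hrec : ∀ e, w ≤ e → ∑ j ∈ range (w + 1), q j * S (e - j) = 0) (hqw : q w ≠ 0)
    (hbelow : ∀ e < s * δ + a s, S e = 0)
    (hgap : ∀ h ≤ s, ∀ k, h * δ + a h < k → k < (h + 1) * δ → S (s * δ + a s + k) = 0)
    (hδ : 0 < δ) (ha0 : a 0 = 0) (hsup : ∀ i j, i + j ≤ s → a i + a j ≤ a (i + j))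
    (hw : s * δ + a s ≤ w) (hws : w < (s + 1) * δ) : S (s * δ + a s) = 0 := by
  by_contra hB
  exact hqw (coeff_eq_zero_of_gap_pattern hrec hbelow hB hgap hδ ha0 hsup s le_rfl w le_rfl
    (by omega) hws)

end GapPattern

section WeightBound

variable {ι K : Type*} [Fintype ι] [Field K] [DecidableEq K]

theorem le_hammingNorm_of_gap_pattern {b v : ι → K} (hv : Function.Injective v)
    (hv0 : ∀ i, b i ≠ 0 → v i ≠ 0) (hb : b ≠ 0) {δ s : ℕ} {a : ℕ → ℕ} (hδ : 0 < δ)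
    (ha0 : a 0 = 0) (hsup : ∀ i j, i + j ≤ s → a i + a j ≤ a (i + j))
    (hbelow : ∀ e < s * δ + a s, weightedPowerSum b v e = 0)
    (hgap : ∀ h ≤ s, ∀ k, h * δ + a h < k → k < (h + 1) * δ →
      weightedPowerSum b v (s * δ + a s + k) = 0) :
    (s + 1) * δ ≤ hammingNorm b := by
  by_contra! hw
  refine hb (eq_zero_of_weightedPowerSum_eq_zero hv fun k hk => ?_)
  rcases lt_trichotomy k (s * δ + a s) with hlt | rfl | hgt
  · exact hbelow k hlt
  · obtain ⟨q, hqw, hrec⟩ := exists_linearRecurrence_weightedPowerSum b v hv0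
    exact eq_zero_of_gap_pattern hrec hqw hbelow hgap hδ ha0 hsup hk.le hw
  · have hδs : (s + 1) * δ = s * δ + δ := by ring
    have := hgap 0 (Nat.zero_le _) (k - (s * δ + a s)) (by omega) (by omega)
    rwa [Nat.add_sub_cancel' hgt.le] at this

end WeightBound

section Pattern

/-- Relative to the pivot `s * δ + t 1 - 1`, block `h` of the pattern occupies the offsets
`[h * δ, (h + 1) * δ)`: its first `patternExcess s t h + 1` offsets are unconstrained (for `h = 0`
only the pivot itself) and the remaining ones are zeros. -/
def patternExcess (s : ℕ) (t : ℕ → ℕ) (h : ℕ) : ℕ := if h = 0 then 0 else t (s + 1 - h) - 1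

def patternZeroSet (δ s : ℕ) (t : ℕ → ℕ) : Finset ℕ :=
  Icc 0 ((s * δ + t 1 - 1) - 1) ∪ Icc ((s * δ + t 1 - 1) + 1) ((s * δ + t 1 - 1) + δ - 1) ∪
    (Icc 1 s).biUnion fun h =>
      Icc ((s * δ + t 1 - 1) + h * δ + t (s + 1 - h)) ((s * δ + t 1 - 1) + (h + 1) * δ - 1)

variable {δ s : ℕ} {t : ℕ → ℕ}

theorem patternExcess_zero : patternExcess s t 0 = 0 := if_pos rfl

theorem patternExcess_self (hs : 1 ≤ s) : patternExcess s t s = t 1 - 1 := by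
  rw [patternExcess, if_neg (by omega), Nat.add_sub_cancel_left]

theorem patternExcess_add_le (ht : ∀ i, 1 ≤ i → i ≤ s → 1 ≤ t i)
    (hineq : ∀ i j k, 1 ≤ i → i ≤ s - 1 → i + 1 ≤ j → j ≤ k → k ≤ s →
      j + k = s + i + 1 → t j + t k ≤ t i + 1)
    {i j : ℕ} (hij : i + j ≤ s) :
    patternExcess s t i + patternExcess s t j ≤ patternExcess s t (i + j) := by
  rcases Nat.eq_zero_or_pos i with rfl | hi
  · simp [patternExcess_zero]
  rcases Nat.eq_zero_or_pos j with rfl | hj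
  · simp [patternExcess_zero]
  simp only [patternExcess, if_neg hi.ne', if_neg hj.ne', if_neg (by omega : i + j ≠ 0)]
  have := ht (s + 1 - i) (by omega) (by omega)
  have := ht (s + 1 - j) (by omega) (by omega)
  have := ht (s + 1 - (i + j)) (by omega) (by omega)
  rcases le_total i j with hle | hle
  · have := hineq (s + 1 - (i + j)) (s + 1 - j) (s + 1 - i) (by omega) (by omega) (by omega)
      (by omega) (by omega) (by omega)
    omega
  · have := hineq (s + 1 - (i + j)) (s + 1 - i) (s + 1 - j) (by omega) (by omega) (by omega)
      (by omega) (by omega) (by omega)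
    omega

theorem mem_patternZeroSet_of_lt {e : ℕ} (he : e < s * δ + t 1 - 1) :
    e ∈ patternZeroSet δ s t := by
  simp only [patternZeroSet, mem_union, mem_Icc]
  omega

theorem add_mem_patternZeroSet (ht : ∀ i, 1 ≤ i → i ≤ s → 1 ≤ t i) {h k : ℕ} (hh : h ≤ s)
    (hlo : h * δ + patternExcess s t h < k) (hhi : k < (h + 1) * δ) :
    s * δ + t 1 - 1 + k ∈ patternZeroSet δ s t := by
  simp only [patternZeroSet, mem_union, mem_Icc, mem_biUnion]
  rcases Nat.eq_zero_or_pos h with rfl | hpos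
  · rw [patternExcess_zero] at hlo
    omega
  · rw [patternExcess, if_neg hpos.ne'] at hlo
    have := ht (s + 1 - h) (by omega) (by omega)
    exact Or.inr ⟨h, by omega, by omega, by omega⟩

end Pattern

theorem corollary_bound_from_inequalities_general
    (δ s : ℕ) (hδ : 2 ≤ δ) (hs : 1 ≤ s) (t : ℕ → ℕ)
    (htl : ∀ i, 1 ≤ i → i ≤ s → 1 ≤ t i ∧ t i ≤ δ - 1)
    (hineq : ∀ i j k, 1 ≤ i → i ≤ s - 1 → i + 1 ≤ j → j ≤ k → k ≤ s →
      j + k = s + i + 1 → t j + t k ≤ t i + 1)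
    {K : Type*} [Field K] [DecidableEq K] (n : ℕ)
    (ξ : K) (hξ : IsPrimitiveRoot ξ n) (i₀ : ℤ)
    (c : Fin n → K) (hc : c ≠ 0)
    (hzero : ∀ e ∈ (Finset.Icc 0 ((s * δ + t 1 - 1) - 1) ∪
        Finset.Icc ((s * δ + t 1 - 1) + 1) ((s * δ + t 1 - 1) + δ - 1) ∪
        (Finset.Icc 1 s).biUnion (fun h =>
          Finset.Icc ((s * δ + t 1 - 1) + h * δ + t (s + 1 - h))
            ((s * δ + t 1 - 1) + (h + 1) * δ - 1))),
      ∑ l : Fin n, c l * ξ ^ ((i₀ + (e : ℤ)) * (l : ℕ)) = 0) :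
    (s + 1) * δ ≤ hammingNorm c := by
  have hξ0 : ξ ≠ 0 := hξ.ne_zero fun hn => hc (funext fun l => (hn ▸ l).elim0)
  set b : Fin n → K := fun l => c l * ξ ^ (i₀ * (l : ℕ))
  set v : Fin n → K := fun l => ξ ^ (l : ℕ)
  have hwt : hammingNorm b = hammingNorm c :=
    hammingNorm_comp (fun (l : Fin n) x => x * ξ ^ (i₀ * (l : ℕ)))
      (fun _ => mul_left_injective₀ (zpow_ne_zero _ hξ0)) fun _ => zero_mul _
  have hS : ∀ e ∈ patternZeroSet δ s t, weightedPowerSum b v e = 0 := fun e he => by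
    rw [← hzero e he, weightedPowerSum]
    refine sum_congr rfl fun l _ => ?_
    rw [add_mul, zpow_add₀ hξ0, ← Nat.cast_mul, zpow_natCast, mul_comm e, pow_mul, mul_assoc]
  have ht : ∀ i, 1 ≤ i → i ≤ s → 1 ≤ t i := fun i h1 h2 => (htl i h1 h2).1
  have hB : s * δ + t 1 - 1 = s * δ + patternExcess s t s := by
    have := ht 1 le_rfl hs
    rw [patternExcess_self hs]
    omega
  rw [← hwt]
  exact le_hammingNorm_of_gap_pattern (fun i j h => Fin.ext (hξ.pow_inj i.is_lt j.is_lt h))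
    (fun _ _ => pow_ne_zero _ hξ0)
    (fun h0 => hc (by simpa [hwt] using hammingNorm_eq_zero.mpr h0))
    (by omega) patternExcess_zero (fun i j hij => patternExcess_add_le ht hineq hij)
    (fun e he => hS e (mem_patternZeroSet_of_lt (by omega)))
    (fun h hh k hlo hhi => hS _ (hB ▸ add_mem_patternZeroSet ht hh hlo hhi))

/-- Corollary 1: if `t_1,…,t_s` solve the system of inequalities, then any nonzero
vector whose DFT vanishes on (a shift of) the zero positions of the pattern
`(0)^{sδ+t_1-1}(Δ)^1(0)^{δ-1}(Δ)^{t_s}(0)^{δ-t_s}⋯(Δ)^{t_1}(0)^{δ-t_1}`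
has Hamming weight at least `(s+1)δ`. -/
theorem corollary_bound_from_inequalities
    (δ s : ℕ) (hδ : 2 ≤ δ) (hs : 1 ≤ s) (t : ℕ → ℕ)
    (htl : ∀ i, 1 ≤ i → i ≤ s → 1 ≤ t i ∧ t i ≤ δ - 1)
    (hineq : ∀ i j k, 1 ≤ i → i ≤ s - 1 → i + 1 ≤ j → j ≤ k → k ≤ s →
      j + k = s + i + 1 → t j + t k ≤ t i + 1)
    {K : Type*} [Field K] [DecidableEq K] (n : ℕ)
    (hn : (2 * s + 1) * δ + t 1 - 1 ≤ n)
    (ξ : K) (hξ : IsPrimitiveRoot ξ n) (i₀ : ℤ)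
    (c : Fin n → K) (hc : c ≠ 0)
    (hzero : ∀ e ∈ (Finset.Icc 0 ((s * δ + t 1 - 1) - 1) ∪
        Finset.Icc ((s * δ + t 1 - 1) + 1) ((s * δ + t 1 - 1) + δ - 1) ∪
        (Finset.Icc 1 s).biUnion (fun h =>
          Finset.Icc ((s * δ + t 1 - 1) + h * δ + t (s + 1 - h))
            ((s * δ + t 1 - 1) + (h + 1) * δ - 1))),
      ∑ l : Fin n, c l * ξ ^ ((i₀ + (e : ℤ)) * (l : ℕ)) = 0) :
    (s + 1) * δ ≤ hammingNorm c :=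
  corollary_bound_from_inequalities_general δ s hδ hs t htl hineq n ξ hξ i₀ c hc hzero
end

section
/- (Bound III.) Let δ ≥ 2, s ≥ 1 and t ≥ 0 be integers with t·⌈(s−1)/2⌉ ≤ δ−2. Let K be a field, n an integer with n ≥ (2s+1)δ + t·⌈(s−1)/2⌉, ξ ∈ K a primitive n-th root of unity, and i₀ an integer. Set B = sδ + t·⌈(s−1)/2⌉. Let c : Fin n → K be nonzero and suppose that ∑_{l=0}^{n−1} c_l ξ^{(i₀+e)·l} = 0 for every e in Z := {0,…,B−1} ∪ {B+1,…,B+δ−1} ∪ ⋃_{h=1}^{s} {B + hδ + ⌈(h−1)/2⌉·t + 1, …, B + (h+1)δ − 1}. Then the Hamming weight of c is at least (s+1)δ. -/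
/-!
Write `S e = ∑ a_l x_l ^ e` for the syndromes, where `x_l = ξ ^ l` and `a_l = c_l x_l ^ i₀`,
and suppose the weight `w` is `< (s + 1) δ ≤ B + δ`, where `B` is the number of leading zeros
of the pattern. The pattern makes `S` vanish on
`[0, B + δ)` except possibly at `B`. If `S B = 0`, then `S` has `w` consecutive zeros and the
Lagrange interpolation argument of the BCH bound forces `a = 0`. Otherwise the error locator
`P = ∏ (X - x_l)` gives the recurrence `∑ P_k S (e + k) = 0`; taken at `e = B - m` and run by
downward induction, it shows `P_m = 0` for every offset `m` of a free symbol `Δ`, because these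
offsets are closed under addition and `S (B + j) = 0` at every other offset `j`. The offset `0`
then gives `P 0 = 0`, impossible as all `x_l ≠ 0`.
-/

open Polynomial Finset

section PowerSum

variable {K ι : Type*} [Field K] [Fintype ι]

def powerSum (a x : ι → K) (e : ℕ) : K := ∑ l, a l * x l ^ e

theorem sum_coeff_mul_powerSum (a x : ι → K) {R : K[X]} {N : ℕ} (hN : R.natDegree < N)
    (e : ℕ) :
    ∑ k ∈ range N, R.coeff k * powerSum a x (e + k) = ∑ l, a l * x l ^ e * R.eval (x l) := by
  simp only [powerSum, mul_sum, eval_eq_sum_range' hN, pow_add]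
  rw [sum_comm]
  exact sum_congr rfl fun _ _ => sum_congr rfl fun _ _ => by ring

theorem sum_coeff_mul_powerSum_eq_zero {a x : ι → K} {R : K[X]}
    (hR : ∀ l, a l ≠ 0 → R.eval (x l) = 0) (e : ℕ) :
    ∑ k ∈ range (R.natDegree + 1), R.coeff k * powerSum a x (e + k) = 0 := by
  rw [sum_coeff_mul_powerSum a x (Nat.lt_succ_self _)]
  refine sum_eq_zero fun l _ => ?_
  by_cases hl : a l = 0
  · simp [hl]
  · simp [hR l hl]

noncomputable def locator [DecidableEq K] (a x : ι → K) : K[X] :=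
  ∏ l ∈ {l | a l ≠ 0}, (X - C (x l))

variable [DecidableEq K] {a x : ι → K}

theorem eq_zero_of_powerSum_eq_zero [DecidableEq ι]
    (hx : Set.InjOn x {l | a l ≠ 0}) (hS : ∀ e < #{l | a l ≠ 0}, powerSum a x e = 0) :
    a = 0 := by
  set D : Finset ι := {l | a l ≠ 0}
  have hxD : Set.InjOn x D := by simpa [D] using hx
  by_contra ha
  obtain ⟨l₀, hl₀⟩ := Function.ne_iff.1 ha
  have hl₀D : l₀ ∈ D := by simpa [D] using hl₀
  -- the Lagrange basis polynomial of `l₀` has degree `< #D` and isolates `a l₀`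
  set Q := Lagrange.basis D x l₀
  have hQ : Q.natDegree < #D := by
    rw [Lagrange.natDegree_basis hxD hl₀D]
    exact Nat.sub_lt (card_pos.2 ⟨l₀, hl₀D⟩) one_pos
  have hsum := sum_coeff_mul_powerSum a x hQ 0
  rw [sum_eq_zero fun k hk => by rw [zero_add, hS k (mem_range.1 hk), mul_zero]] at hsum
  rw [sum_eq_single l₀ (fun l _ hl => ?_) (by simp), Lagrange.eval_basis_self hxD hl₀D] at hsum
  · exact hl₀ (by simpa using hsum.symm)
  · by_cases hla : a l = 0
    · simp [hla]
    · rw [Lagrange.eval_basis_of_ne (Ne.symm hl) (by simpa [D] using hla), mul_zero]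

theorem natDegree_locator : (locator a x).natDegree = #{l | a l ≠ 0} :=
  natDegree_finsetProd_X_sub_C_eq_card _ _

theorem eval_locator_eq_zero {l : ι} (hl : a l ≠ 0) : (locator a x).eval (x l) = 0 := by
  rw [locator, eval_prod]
  exact prod_eq_zero (by simpa using hl) (by simp)

theorem coeff_zero_locator_ne_zero (hx : ∀ l, a l ≠ 0 → x l ≠ 0) :
    (locator a x).coeff 0 ≠ 0 := by
  rw [coeff_zero_eq_eval_zero, locator, eval_prod, prod_ne_zero_iff]
  intro l hl
  simpa using hx l (by simpa using hl)

end PowerSum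

theorem coeff_eq_zero_of_recurrence {K : Type*} [Field K] {S : ℕ → K} {P : K[X]} {B : ℕ}
    {A : Set ℕ} (hrec : ∀ e, ∑ k ∈ range (P.natDegree + 1), P.coeff k * S (e + k) = 0)
    (hA : ∀ i ∈ A, ∀ j ∈ A, i + j ∈ A) (hAB : ∀ m ∈ A, m ≤ P.natDegree → m ≤ B)
    (hlow : ∀ i < B, S i = 0) (hgap : ∀ j, 0 < j → j ≤ P.natDegree → j ∉ A → S (B + j) = 0)
    (hSB : S B ≠ 0) {m : ℕ} (hm : m ∈ A) : P.coeff m = 0 := by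
  suffices ∀ d, ∀ m ∈ A, P.natDegree < m + d → P.coeff m = 0 from
    this (P.natDegree + 1) m hm (by omega)
  intro d
  induction d with
  | zero => exact fun m _ hm => coeff_eq_zero_of_natDegree_lt hm
  | succ d ih =>
    intro m hm hmd
    rcases lt_or_ge P.natDegree m with hlt | hle
    · exact coeff_eq_zero_of_natDegree_lt hlt
    have hmB := hAB m hm hle
    have hterm : ∀ k ∈ range (P.natDegree + 1), k ≠ m → P.coeff k * S (B - m + k) = 0 := by
      intro k hk hkm
      have hk := mem_range.1 hk
      rcases hkm.lt_or_gt with hkm | hkm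
      · rw [hlow _ (by omega), mul_zero]
      obtain ⟨j, rfl⟩ := Nat.exists_eq_add_of_le hkm.le
      by_cases hj : j ∈ A
      · rw [ih _ (hA _ hm _ hj) (by omega), zero_mul]
      · rw [show B - m + (m + j) = B + j by omega,
          hgap j (by omega) (by omega) hj, mul_zero]
    have hB := hrec (B - m)
    rw [sum_eq_single_of_mem m (mem_range.2 (by omega)) hterm,
      Nat.sub_add_cancel hmB] at hB
    exact (mul_eq_zero.1 hB).resolve_right hSB

section Pattern

variable {δ s t : ℕ}

/-- The zeros of `(0)^B ((Δ)^1 (0)^(δ-1)) ∏_{h=1}^{s} ((Δ)^(⌈(h-1)/2⌉t+1) (0)^(δ-⌈(h-1)/2⌉t-1))`;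
`⌈(h-1)/2⌉` is written `(h - 1 + 1) / 2`, which equals `h / 2` for every `h : ℕ`. -/
def patternZeros (δ s t B : ℕ) : Finset ℕ :=
  Icc 0 (B - 1) ∪ Icc (B + 1) (B + δ - 1) ∪
    (Icc 1 s).biUnion fun h => Icc (B + h * δ + (h - 1 + 1) / 2 * t + 1) (B + (h + 1) * δ - 1)

/-- Offsets from `B` of the symbols `Δ` of the pattern: in the block `h` they are `h δ + r` with
`r ≤ ⌊h/2⌋ t`. -/
def freeOffsets (δ t : ℕ) : Set ℕ := {j | ∃ h r, j = h * δ + r ∧ r ≤ h / 2 * t}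

theorem zero_mem_freeOffsets : 0 ∈ freeOffsets δ t := ⟨0, 0, by simp, Nat.zero_le _⟩

-- `⌊h/2⌋` is superadditive: this is what lets the runs of `Δ` grow with `h`.
theorem add_mem_freeOffsets {i j : ℕ} (hi : i ∈ freeOffsets δ t) (hj : j ∈ freeOffsets δ t) :
    i + j ∈ freeOffsets δ t := by
  obtain ⟨h₁, r₁, rfl, hr₁⟩ := hi
  obtain ⟨h₂, r₂, rfl, hr₂⟩ := hj
  refine ⟨h₁ + h₂, r₁ + r₂, by ring, ?_⟩
  calc r₁ + r₂ ≤ (h₁ / 2 + h₂ / 2) * t := by rw [add_mul]; omega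
    _ ≤ (h₁ + h₂) / 2 * t := Nat.mul_le_mul_right _ (by omega)

theorem le_of_mem_freeOffsets {m : ℕ} (hm : m ∈ freeOffsets δ t) (hlt : m < (s + 1) * δ) :
    m ≤ s * δ + s / 2 * t := by
  obtain ⟨h, r, rfl, hr⟩ := hm
  have hhs : h ≤ s := by
    by_contra! hsh
    have : (s + 1) * δ ≤ h * δ := Nat.mul_le_mul_right δ hsh
    omega
  have := Nat.mul_le_mul_right δ hhs
  have := Nat.mul_le_mul_right t (Nat.div_le_div_right (c := 2) hhs)
  omega

theorem mem_patternZeros_of_ne {B e : ℕ} (he : e < B + δ) (heB : e ≠ B) :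
    e ∈ patternZeros δ s t B := by
  simp only [patternZeros, mem_union, mem_Icc]
  omega

theorem add_mem_patternZeros {B j : ℕ} (hδ : 0 < δ) (hj : j < (s + 1) * δ)
    (hjA : j ∉ freeOffsets δ t) : B + j ∈ patternZeros δ s t B := by
  obtain ⟨h, r, hr, hjr⟩ : ∃ h r, r < δ ∧ j = h * δ + r :=
    ⟨j / δ, j % δ, Nat.mod_lt _ hδ, by rw [mul_comm, Nat.div_add_mod]⟩
  have hrt : h / 2 * t < r := by
    by_contra! hrt
    exact hjA ⟨h, r, hjr, hrt⟩
  have hhs : h ≤ s := by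
    by_contra! hsh
    have : (s + 1) * δ ≤ h * δ := Nat.mul_le_mul_right δ hsh
    omega
  simp only [patternZeros, mem_union, mem_Icc, mem_biUnion]
  rcases Nat.eq_zero_or_pos h with rfl | hh
  · omega
  · refine Or.inr ⟨h, by omega, ?_⟩
    rw [show (h - 1 + 1) / 2 = h / 2 by omega, add_mul, one_mul]
    omega

end Pattern

theorem le_card_of_powerSum_eq_zero_on_patternZeros {K ι : Type*} [Field K] [Fintype ι]
    [DecidableEq ι] [DecidableEq K] {a x : ι → K} {δ s t B : ℕ} (hδ : 0 < δ)
    (hB : s * δ + s / 2 * t ≤ B) (hx : Set.InjOn x {l | a l ≠ 0})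
    (hx0 : ∀ l, a l ≠ 0 → x l ≠ 0) (ha : a ≠ 0)
    (hS : ∀ e ∈ patternZeros δ s t B, powerSum a x e = 0) :
    (s + 1) * δ ≤ #{l | a l ≠ 0} := by
  by_contra! hw
  have hsδ : (s + 1) * δ = s * δ + δ := by ring
  by_cases hSB : powerSum a x B = 0
  · exact ha <| eq_zero_of_powerSum_eq_zero hx fun e he =>
      if heB : e = B then heB ▸ hSB else hS e (mem_patternZeros_of_ne (by omega) heB)
  · refine coeff_zero_locator_ne_zero hx0 <|
      coeff_eq_zero_of_recurrence (sum_coeff_mul_powerSum_eq_zero fun _ => eval_locator_eq_zero)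
        (fun _ hi _ hj => add_mem_freeOffsets hi hj)
        (fun m hm hmP => (le_of_mem_freeOffsets hm
          (by rw [natDegree_locator] at hmP; omega)).trans hB)
        (fun i hi => hS i (mem_patternZeros_of_ne (by omega) hi.ne))
        (fun j _ hj hjA => hS _ (add_mem_patternZeros hδ
          (by rw [natDegree_locator] at hj; omega) hjA))
        hSB zero_mem_freeOffsets

theorem bound_III_general
    (δ s t : ℕ) (hδ : 2 ≤ δ)
    {K : Type*} [Field K] [DecidableEq K] (n : ℕ)
    (ξ : K) (hξ : IsPrimitiveRoot ξ n) (i₀ : ℤ)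
    (c : Fin n → K) (hc : c ≠ 0)
    (hzero : ∀ e ∈ (Finset.Icc 0 ((s * δ + t * ((s - 1 + 1) / 2)) - 1) ∪
        Finset.Icc ((s * δ + t * ((s - 1 + 1) / 2)) + 1)
          ((s * δ + t * ((s - 1 + 1) / 2)) + δ - 1) ∪
        (Finset.Icc 1 s).biUnion (fun h =>
          Finset.Icc ((s * δ + t * ((s - 1 + 1) / 2)) + h * δ + ((h - 1 + 1) / 2) * t + 1)
            ((s * δ + t * ((s - 1 + 1) / 2)) + (h + 1) * δ - 1))),
      ∑ l : Fin n, c l * ξ ^ ((i₀ + (e : ℤ)) * (l : ℕ)) = 0) :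
    (s + 1) * δ ≤ hammingNorm c := by
  have hx0 (l : Fin n) : ξ ^ (l : ℕ) ≠ 0 := pow_ne_zero _ (hξ.ne_zero l.pos.ne')
  have hsupp (l : Fin n) : c l * (ξ ^ (l : ℕ)) ^ i₀ ≠ 0 ↔ c l ≠ 0 := by
    simp [zpow_ne_zero i₀ (hx0 l)]
  have hS (e : ℕ) : powerSum (fun l => c l * (ξ ^ (l : ℕ)) ^ i₀) (fun l => ξ ^ (l : ℕ)) e =
      ∑ l : Fin n, c l * ξ ^ ((i₀ + (e : ℤ)) * (l : ℕ)) := by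
    refine sum_congr rfl fun l _ => ?_
    rw [mul_comm _ ((l : ℕ) : ℤ), zpow_mul, zpow_natCast, zpow_add₀ (hx0 l), zpow_natCast,
      mul_assoc]
  have key := le_card_of_powerSum_eq_zero_on_patternZeros (by omega)
    (le_of_eq (by rw [show (s - 1 + 1) / 2 = s / 2 by omega, mul_comm t]))
    (fun l₁ _ l₂ _ h => Fin.ext (hξ.pow_inj l₁.2 l₂.2 h)) (fun l _ => hx0 l)
    (fun ha => hc (funext fun l => by simpa [zpow_ne_zero i₀ (hx0 l)] using congr_fun ha l))
    (fun e he => (hS e).trans (hzero e he))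
  simpa only [hammingNorm, hsupp] using key

/-- Bound III (Theorem 8): pattern
`(0)^{sδ+t⌈(s-1)/2⌉}((Δ)^1(0)^{δ-1})^2((Δ)^{t+1}(0)^{δ-t-1})^2⋯(Δ)^{⌈(s-1)/2⌉t+1}(0)^{δ-⌈(s-1)/2⌉t-1}`
gives minimum distance at least `(s+1)δ`.  Here `⌈(m)/2⌉` is written `(m+1)/2`
using natural division. -/
theorem bound_III
    (δ s t : ℕ) (hδ : 2 ≤ δ) (hs : 1 ≤ s)
    (ht : t * ((s - 1 + 1) / 2) ≤ δ - 2)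
    {K : Type*} [Field K] [DecidableEq K] (n : ℕ)
    (hn : (2 * s + 1) * δ + t * ((s - 1 + 1) / 2) ≤ n)
    (ξ : K) (hξ : IsPrimitiveRoot ξ n) (i₀ : ℤ)
    (c : Fin n → K) (hc : c ≠ 0)
    (hzero : ∀ e ∈ (Finset.Icc 0 ((s * δ + t * ((s - 1 + 1) / 2)) - 1) ∪
        Finset.Icc ((s * δ + t * ((s - 1 + 1) / 2)) + 1)
          ((s * δ + t * ((s - 1 + 1) / 2)) + δ - 1) ∪
        (Finset.Icc 1 s).biUnion (fun h =>
          Finset.Icc ((s * δ + t * ((s - 1 + 1) / 2)) + h * δ + ((h - 1 + 1) / 2) * t + 1)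
            ((s * δ + t * ((s - 1 + 1) / 2)) + (h + 1) * δ - 1))),
      ∑ l : Fin n, c l * ξ ^ ((i₀ + (e : ℤ)) * (l : ℕ)) = 0) :
    (s + 1) * δ ≤ hammingNorm c :=
  bound_III_general δ s t hδ n ξ hξ i₀ c hc hzero
end

section
/- (Betti–Sala bound.) Let δ ≥ 1 and s ≥ 1 be integers. Let K be a field, n an integer with n ≥ (2s+1)δ, ξ ∈ K a primitive n-th root of unity, and i₀ an integer. Let c : Fin n → K be nonzero and suppose that ∑_{l=0}^{n−1} c_l ξ^{(i₀+j)·l} = 0 for every j with 0 ≤ j ≤ sδ−1, and for every j of the form j = (s+h)δ + u with 0 ≤ h ≤ s and 1 ≤ u ≤ δ−1. Then the Hamming weight of c is at least (s+1)δ. -/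
/-!
Let `S` be the support of `c`, with locators `x_l = ξ^l` and weights `c_l ξ^(i₀ l)`, and let
`a_j = ∑ c_l ξ^((i₀ + j) l)` be the syndromes. As power series, the error locator
`σ = ∏ (1 - x_l X)` times `∑ a_j X^j` is the error evaluator `ω`, which is nonzero of degree
`< w = |S|`, while `σ(0) = 1` and `deg σ = w`. If `w < (s+1)δ`, the first nonzero syndrome `a_J`
is the coefficient of `X^J` in `ω`, so `J < w < (s+1)δ`, which forces `J = sδ`; hence
`w = sδ + r` with `r < δ`.
Below `(2s+1)δ` the only other syndromes that may be nonzero are the `a_{(s+h)δ}`, so comparing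
coefficients of `X^(sδ+m)` shows, by strong induction on `m`, that `σ_m = 0` whenever
`r ≤ m % δ`; at `m = w` this kills the leading coefficient of `σ`.
-/

open Polynomial Finset

namespace Polynomial

variable {K : Type*} [Field K]

theorem sum_coeff_one_sub_C_mul_X_mul_mul_pow (P : K[X]) (a : K) (k : ℕ) :
    ∑ j ∈ range (k + 1), ((1 - C a * X) * P).coeff (k - j) * a ^ j = P.coeff k := by
  induction k with
  | zero => simp
  | succ k ih =>
    have hcoeff : ((1 - C a * X) * P).coeff (k + 1) = P.coeff (k + 1) - a * P.coeff k := by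
      rw [sub_mul, one_mul, coeff_sub, mul_assoc, coeff_C_mul, coeff_X_mul]
    rw [sum_range_succ', Nat.sub_zero, pow_zero, mul_one, hcoeff, ← ih, mul_sum]
    simp only [Nat.add_sub_add_right, pow_succ', mul_left_comm _ a]
    ring

theorem natDegree_one_sub_C_mul_X {a : K} (ha : a ≠ 0) : (1 - C a * X).natDegree = 1 := by
  rw [show (1 - C a * X : K[X]) = C (-a) * X + C 1 by simp; ring]
  exact natDegree_linear (neg_ne_zero.mpr ha)

theorem leadingCoeff_one_sub_C_mul_X {a : K} (ha : a ≠ 0) : (1 - C a * X).leadingCoeff = -a := by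
  rw [show (1 - C a * X : K[X]) = C (-a) * X + C 1 by simp; ring]
  exact leadingCoeff_linear (neg_ne_zero.mpr ha)

end Polynomial

namespace CyclicCode

variable {K : Type*} [Field K]

section KeyEquation

variable {σ G : K[X]} {a : ℕ → K}

theorem coeff_eq_of_forall_lt_eq_zero
    (hkey : ∀ k, ∑ j ∈ range (k + 1), σ.coeff (k - j) * a j = G.coeff k) (hσ0 : σ.coeff 0 = 1)
    {J : ℕ} (ha : ∀ j < J, a j = 0) : G.coeff J = a J := by
  rw [← hkey, sum_range_succ, sum_eq_zero fun j hj => by rw [ha j (mem_range.mp hj), mul_zero],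
    Nat.sub_self, hσ0, zero_add, one_mul]

theorem coeff_eq_zero_of_le_add_mod
    (hkey : ∀ k, ∑ j ∈ range (k + 1), σ.coeff (k - j) * a j = G.coeff k) {s δ w : ℕ}
    (hlow : ∀ j < s * δ, a j = 0) (hgap : ∀ i < (s + 1) * δ, i % δ ≠ 0 → a (s * δ + i) = 0)
    (hb : a (s * δ) ≠ 0) (hG : ∀ k, w ≤ k → G.coeff k = 0) (m : ℕ) (hm : m < (s + 1) * δ)
    (hw : w ≤ s * δ + m % δ) : σ.coeff m = 0 := by
  induction m using Nat.strong_induction_on with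
  | _ m ih =>
  have hsum := hkey (s * δ + m)
  rw [hG _ (by have := Nat.mod_le m δ; omega),
    sum_eq_single_of_mem (s * δ) (mem_range.mpr (by omega)) ?_, Nat.add_sub_cancel_left] at hsum
  · exact (mul_eq_zero.mp hsum).resolve_right hb
  intro j hj hjs
  rcases lt_or_gt_of_ne hjs with hlt | hgt
  · rw [hlow j hlt, mul_zero]
  obtain ⟨i, rfl⟩ : ∃ i, j = s * δ + i := ⟨j - s * δ, by omega⟩
  have him : i ≤ m := by rw [mem_range] at hj; omega
  by_cases hi : i % δ = 0
  · obtain ⟨q, rfl⟩ := Nat.dvd_of_mod_eq_zero hi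
    rw [Nat.add_sub_add_left, ih _ (by omega) (by omega) (by rwa [Nat.sub_mul_mod him]), zero_mul]
  · rw [hgap i (by omega) hi, mul_zero]

theorem le_of_key_equation
    (hkey : ∀ k, ∑ j ∈ range (k + 1), σ.coeff (k - j) * a j = G.coeff k) {s δ w : ℕ}
    (hσ0 : σ.coeff 0 = 1) (hσw : σ.coeff w ≠ 0) (hGw : ∀ k, w ≤ k → G.coeff k = 0) (hG : G ≠ 0)
    (hlow : ∀ j < s * δ, a j = 0)
    (hhigh : ∀ h u, h ≤ s → 1 ≤ u → u ≤ δ - 1 → a ((s + h) * δ + u) = 0) :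
    (s + 1) * δ ≤ w := by
  classical
  by_contra! hw
  have hsδ : (s + 1) * δ = s * δ + δ := by ring
  have hgap : ∀ i < (s + 1) * δ, i % δ ≠ 0 → a (s * δ + i) = 0 := by
    intro i hi hi0
    have hδ : 0 < δ := Nat.pos_of_ne_zero fun h => by simp [h] at hi
    have hdiv : i / δ ≤ s := Nat.lt_succ_iff.mp ((Nat.div_lt_iff_lt_mul hδ).mpr hi)
    have hi' : s * δ + i = (s + i / δ) * δ + i % δ := by
      rw [add_mul, add_assoc, mul_comm (i / δ), Nat.div_add_mod]
    rw [hi']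
    exact hhigh _ _ hdiv (by omega) (by have := Nat.mod_lt i hδ; omega)
  have hex : ∃ j, a j ≠ 0 := by
    by_contra! ha
    exact hG (ext fun k => (coeff_eq_of_forall_lt_eq_zero hkey hσ0 fun j _ => ha j).trans (ha k))
  have hGJ : G.coeff (Nat.find hex) = a (Nat.find hex) :=
    coeff_eq_of_forall_lt_eq_zero hkey hσ0 fun j hj => not_not.mp (Nat.find_min hex hj)
  have hJw : Nat.find hex < w := by
    by_contra! h
    exact Nat.find_spec hex (hGJ ▸ hGw _ h)
  have hJ : Nat.find hex = s * δ := by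
    have hle : s * δ ≤ Nat.find hex := by
      by_contra! h
      exact Nat.find_spec hex (hlow _ h)
    by_contra hne
    obtain ⟨i, hi⟩ : ∃ i, Nat.find hex = s * δ + i := ⟨Nat.find hex - s * δ, by omega⟩
    exact Nat.find_spec hex (hi ▸ hgap i (by omega) (by rw [Nat.mod_eq_of_lt (by omega)]; omega))
  obtain ⟨r, rfl⟩ : ∃ r, w = s * δ + r := ⟨w - s * δ, by omega⟩
  refine hσw (coeff_eq_zero_of_le_add_mod hkey hlow hgap (hJ ▸ Nat.find_spec hex) hGw _ hw ?_)
  rw [Nat.mul_add_mod', Nat.mod_eq_of_lt (by omega)]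

end KeyEquation

section Locators

variable {ι : Type*} (S : Finset ι) (x c : ι → K)

def syndrome (j : ℕ) : K := ∑ l ∈ S, c l * x l ^ j

noncomputable def errorLocator : K[X] := ∏ l ∈ S, (1 - C (x l) * X)

theorem errorLocator_coeff_zero : (errorLocator S x).coeff 0 = 1 := by
  simp [errorLocator, coeff_zero_eq_eval_zero, eval_prod]

variable {S x} in
theorem errorLocator_coeff_card_ne_zero (hx : ∀ l ∈ S, x l ≠ 0) :
    (errorLocator S x).coeff #S ≠ 0 := by
  have hfac : ∀ l ∈ S, (1 - C (x l) * X : K[X]) ≠ 0 := fun l hl h => by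
    simpa [h] using natDegree_one_sub_C_mul_X (hx l hl)
  have hdeg : (errorLocator S x).natDegree = #S := by
    rw [errorLocator, natDegree_prod _ _ hfac, sum_congr rfl fun l hl =>
      natDegree_one_sub_C_mul_X (hx l hl), sum_const, smul_eq_mul, mul_one]
  rw [← hdeg, coeff_natDegree, errorLocator, leadingCoeff_prod,
    prod_congr rfl fun l hl => leadingCoeff_one_sub_C_mul_X (hx l hl)]
  exact prod_ne_zero_iff.mpr fun l hl => neg_ne_zero.mpr (hx l hl)

variable [DecidableEq ι]

noncomputable def errorEvaluator : K[X] :=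
  ∑ l ∈ S, C (c l) * ∏ m ∈ S.erase l, (1 - C (x m) * X)

theorem key_equation (k : ℕ) :
    ∑ j ∈ range (k + 1), (errorLocator S x).coeff (k - j) * syndrome S x c j =
      (errorEvaluator S x c).coeff k := by
  simp only [syndrome, mul_sum, errorEvaluator, finsetSum_coeff, coeff_C_mul]
  rw [sum_comm]
  refine sum_congr rfl fun l hl => ?_
  rw [errorLocator, ← mul_prod_erase S _ hl, ← sum_coeff_one_sub_C_mul_X_mul_mul_pow, mul_sum]
  exact sum_congr rfl fun j _ => by ring

variable {S x c}

theorem errorEvaluator_coeff_eq_zero {k : ℕ} (hk : #S ≤ k) :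
    (errorEvaluator S x c).coeff k = 0 := by
  rw [errorEvaluator, finsetSum_coeff]
  refine sum_eq_zero fun l hl => coeff_eq_zero_of_natDegree_lt ?_
  calc (C (c l) * ∏ m ∈ S.erase l, (1 - C (x m) * X)).natDegree
      ≤ ∑ m ∈ S.erase l, (1 - C (x m) * X).natDegree :=
        (natDegree_C_mul_le _ _).trans (natDegree_prod_le _ _)
    _ ≤ #(S.erase l) := sum_le_card_nsmul _ _ 1 (fun m _ => by compute_degree) |>.trans (by simp)
    _ < k := by rw [card_erase_of_mem hl]; have := card_pos.mpr ⟨l, hl⟩; omega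

theorem errorEvaluator_eval_inv {l : ι} (hl : l ∈ S) (hxl : x l ≠ 0) :
    (errorEvaluator S x c).eval (x l)⁻¹ = c l * ∏ m ∈ S.erase l, (1 - x m * (x l)⁻¹) := by
  simp only [errorEvaluator, eval_finsetSum, eval_mul, eval_C, eval_prod, eval_sub, eval_one,
    eval_X]
  refine sum_eq_single_of_mem l hl fun m hm hml => ?_
  rw [prod_eq_zero (mem_erase.mpr ⟨Ne.symm hml, hl⟩) (by rw [mul_inv_cancel₀ hxl, sub_self]),
    mul_zero]

theorem errorEvaluator_ne_zero (hS : S.Nonempty) (hxinj : Set.InjOn x S) (hx : ∀ l ∈ S, x l ≠ 0)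
    (hc : ∀ l ∈ S, c l ≠ 0) : errorEvaluator S x c ≠ 0 := by
  obtain ⟨l, hl⟩ := hS
  intro h
  have heval := errorEvaluator_eval_inv (c := c) hl (hx l hl)
  rw [h, eval_zero, eq_comm] at heval
  refine mul_ne_zero (hc l hl) (prod_ne_zero_iff.mpr fun m hm h0 => ?_) heval
  obtain ⟨hml, hm⟩ := mem_erase.mp hm
  exact hml (hxinj hm hl ((mul_inv_eq_one₀ (hx l hl)).mp (sub_eq_zero.mp h0).symm))

theorem le_card_of_syndrome_eq_zero {s δ : ℕ} (hS : S.Nonempty) (hxinj : Set.InjOn x S)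
    (hx : ∀ l ∈ S, x l ≠ 0) (hc : ∀ l ∈ S, c l ≠ 0) (hlow : ∀ j < s * δ, syndrome S x c j = 0)
    (hhigh : ∀ h u, h ≤ s → 1 ≤ u → u ≤ δ - 1 → syndrome S x c ((s + h) * δ + u) = 0) :
    (s + 1) * δ ≤ #S :=
  le_of_key_equation (key_equation S x c) (errorLocator_coeff_zero S x)
    (errorLocator_coeff_card_ne_zero hx) (fun _ => errorEvaluator_coeff_eq_zero)
    (errorEvaluator_ne_zero hS hxinj hx hc) hlow hhigh

end Locators

end CyclicCode

open CyclicCode in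
theorem betti_sala_bound_general
    (δ s : ℕ)
    {K : Type*} [Field K] [DecidableEq K] (n : ℕ)
    (ξ : K) (hξ : IsPrimitiveRoot ξ n) (i₀ : ℤ)
    (c : Fin n → K) (hc : c ≠ 0)
    (h1 : ∀ j : ℕ, j < s * δ → ∑ l : Fin n, c l * ξ ^ ((i₀ + (j : ℤ)) * (l : ℕ)) = 0)
    (h2 : ∀ h u : ℕ, h ≤ s → 1 ≤ u → u ≤ δ - 1 →
      ∑ l : Fin n, c l * ξ ^ ((i₀ + (((s + h) * δ + u : ℕ) : ℤ)) * (l : ℕ)) = 0) :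
    (s + 1) * δ ≤ hammingNorm c := by
  obtain ⟨l₀, hl₀⟩ := Function.ne_iff.mp hc
  have hξ0 : ξ ≠ 0 := hξ.ne_zero (Fin.pos l₀).ne'
  have hsyn (j : ℕ) : syndrome {l | c l ≠ 0} (fun l : Fin n => ξ ^ (l : ℕ))
      (fun l => c l * ξ ^ (i₀ * (l : ℕ))) j =
        ∑ l : Fin n, c l * ξ ^ ((i₀ + (j : ℤ)) * (l : ℕ)) := by
    rw [syndrome, sum_filter_of_ne fun l _ h => left_ne_zero_of_mul (left_ne_zero_of_mul h)]
    refine sum_congr rfl fun l _ => ?_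
    rw [mul_assoc, add_mul, zpow_add₀ hξ0, ← pow_mul, mul_comm (l : ℕ), ← zpow_natCast]
    push_cast
    rfl
  exact le_card_of_syndrome_eq_zero ⟨l₀, by simpa using hl₀⟩
    (fun l _ m _ h => Fin.ext (hξ.pow_inj l.isLt m.isLt h)) (fun _ _ => pow_ne_zero _ hξ0)
    (fun l hl => mul_ne_zero (mem_filter.mp hl).2 (zpow_ne_zero _ hξ0))
    (fun j hj => (hsyn j).trans (h1 j hj))
    (fun h u hh hu hu' => (hsyn _).trans (h2 h u hh hu hu'))

/-- The Betti–Sala bound (Theorem 4): a cyclic code whose defining set contains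
`{i₀+j : 0 ≤ j ≤ sδ-1}` and `{i₀+(s+h)δ+u : 0 ≤ h ≤ s, 1 ≤ u ≤ δ-1}` has minimum
distance at least `(s+1)δ`. -/
theorem betti_sala_bound
    (δ s : ℕ) (hδ : 1 ≤ δ) (hs : 1 ≤ s)
    {K : Type*} [Field K] [DecidableEq K] (n : ℕ)
    (hn : (2 * s + 1) * δ ≤ n)
    (ξ : K) (hξ : IsPrimitiveRoot ξ n) (i₀ : ℤ)
    (c : Fin n → K) (hc : c ≠ 0)
    (h1 : ∀ j : ℕ, j < s * δ → ∑ l : Fin n, c l * ξ ^ ((i₀ + (j : ℤ)) * (l : ℕ)) = 0)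
    (h2 : ∀ h u : ℕ, h ≤ s → 1 ≤ u → u ≤ δ - 1 →
      ∑ l : Fin n, c l * ξ ^ ((i₀ + (((s + h) * δ + u : ℕ) : ℤ)) * (l : ℕ)) = 0) :
    (s + 1) * δ ≤ hammingNorm c :=
  betti_sala_bound_general δ s n ξ hξ i₀ c hc h1 h2
end

section
/- Let δ ≥ 2, 1 ≤ t ≤ δ−1 and m ≥ 0 be integers. Let K be a field, n an integer with n ≥ 3δ + t + m(δ+1) − 1, ξ ∈ K a primitive n-th root of unity, and i₀ an integer. Let c : Fin n → K be nonzero and suppose that ∑_{l=0}^{n−1} c_l ξ^{(i₀+e)·l} = 0 for every e in Z := {0,…,δ+t−2} ∪ ⋃_{h=0}^{m} {δ+t+h(δ+1), …, δ+t+h(δ+1)+δ−2} ∪ {2δ+2t+m(δ+1)−1, …, 3δ+t+m(δ+1)−2}. Then the Hamming weight of c is at least 2δ. -/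
/-!
The syndromes `u e = ∑ l, c l * ξ ^ ((i₀ + e) * l)` are power sums over the support `S` of `c`, so
their generating function `U` times the error locator `Λ = ∏ l ∈ S, (1 - ξ ^ l * X)`, of degree
`w = wt c`, is a polynomial of degree `< w`. Suppose `w < 2δ`. The first runs of zeros give
`U = s * X ^ (δ + t - 1) * V` with `s ≠ 0` and `V ≡ 1 mod X ^ δ`, hence `V * Λ = Λ mod X ^ δ`, a
polynomial of degree `≤ w - δ - t`. The next run of zeros of `V` (the last run if `m = 0`, the
second block if `m > 0`) makes `V` invertible modulo `X ^ (2δ)` by some `1 + X ^ δ * P` with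
`deg P < κ`, where `κ = t` resp. `κ = 2`, and then `Λ = (Λ mod X ^ δ) * (1 + X ^ δ * P)`, so
`deg P ≥ t`. For `m = 0` this is absurd; for `m > 0` it gives `t = 1` and
`V = 1 / (1 + p₀ X ^ δ + p₁ X ^ (δ + 1))` with `p₁ ≠ 0`, whose coefficient at `h * (δ + 1)` is
`(-p₁) ^ h` as long as those at `h * (δ + 1) + 1` vanish: this contradicts the last run of zeros.
-/

open Finset PowerSeries
open scoped Polynomial

section ErrorLocator

variable {R ι : Type*} [CommRing R] (S : Finset ι) (x : ι → R)

theorem PowerSeries.mk_pow_mul_one_sub_C_mul_X (a : R) : mk (a ^ ·) * (1 - C a * X) = 1 := by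
  simpa [rescale_mk, rescale_X] using congrArg (rescale a) (mk_one_mul_one_sub_eq_one R)

noncomputable def errorLocator : R[X] := ∏ l ∈ S, (1 - Polynomial.C (x l) * Polynomial.X)

theorem errorLocator_ne_zero [Nontrivial R] : errorLocator S x ≠ 0 := fun h => by
  simpa [errorLocator, Polynomial.eval_prod] using congrArg (Polynomial.eval 0) h

theorem natDegree_errorLocator_le : (errorLocator S x).natDegree ≤ #S :=
  (Polynomial.natDegree_prod_le _ _).trans <|
    (Finset.sum_le_card_nsmul _ _ 1 fun _ _ => by compute_degree).trans (by simp)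

theorem natDegree_errorLocator [IsDomain R] {S : Finset ι} {x : ι → R}
    (hx : ∀ l ∈ S, x l ≠ 0) :
    (errorLocator S x).natDegree = #S := by
  rw [errorLocator, Polynomial.natDegree_prod _ _ fun l _ h => by
      simpa using congrArg (Polynomial.coeff · 0) h, Finset.card_eq_sum_ones]
  refine Finset.sum_congr rfl fun l hl => ?_
  compute_degree!
  simpa using hx l hl

theorem coe_errorLocator :
    (errorLocator S x : R⟦X⟧) = ∏ l ∈ S, (1 - C (x l) * X) := by
  rw [errorLocator, ← Polynomial.coeToPowerSeries.ringHom_apply, map_prod]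
  simp [Polynomial.coeToPowerSeries.ringHom_apply, Polynomial.coe_C, Polynomial.coe_X]

theorem coeff_mk_sum_mul_pow_mul_errorLocator [DecidableEq ι] (d : ι → R) {e : ℕ}
    (he : #S ≤ e) :
    coeff e (mk (fun e => ∑ l ∈ S, d l * x l ^ e) * (errorLocator S x : R⟦X⟧)) = 0 := by
  have hmk : mk (fun e => ∑ l ∈ S, d l * x l ^ e) = ∑ l ∈ S, C (d l) * mk (x l ^ ·) := by
    ext; simp [map_sum, coeff_C_mul]
  have hterm : ∀ l ∈ S, C (d l) * mk (x l ^ ·) * (errorLocator S x : R⟦X⟧) =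
      ↑(Polynomial.C (d l) * errorLocator (S.erase l) x) := by
    intro l hl
    rw [Polynomial.coe_mul, Polynomial.coe_C, coe_errorLocator, coe_errorLocator,
      ← Finset.mul_prod_erase S _ hl, ← mul_assoc, mul_assoc (C (d l)),
      mk_pow_mul_one_sub_C_mul_X, mul_one]
  rw [hmk, Finset.sum_mul, Finset.sum_congr rfl hterm, map_sum]
  refine Finset.sum_eq_zero fun l hl => ?_
  rw [Polynomial.coeff_coe]
  refine Polynomial.coeff_eq_zero_of_natDegree_lt ?_
  have := natDegree_errorLocator_le (S.erase l) x
  have := Finset.card_erase_lt_of_mem hl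
  have := Polynomial.natDegree_C_mul_le (d l) (errorLocator (S.erase l) x)
  omega

end ErrorLocator

section PowerSeries

variable {R : Type*} [CommRing R]

theorem PowerSeries.eq_zero_of_coeff_mul_eq_zero [IsDomain R] {U : R⟦X⟧} {D : R[X]}
    (hD : D ≠ 0) (hrec : ∀ e, D.natDegree ≤ e → coeff e (U * (D : R⟦X⟧)) = 0)
    (hU : ∀ e < D.natDegree, coeff e U = 0) :
    U = 0 := by
  have hUD : U * (D : R⟦X⟧) = 0 := by
    ext e
    rcases lt_or_ge e D.natDegree with he | he
    · rw [coeff_mul, map_zero]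
      refine Finset.sum_eq_zero fun p hp => ?_
      rw [hU p.1 (by have := mem_antidiagonal.mp hp; omega), zero_mul]
    · exact hrec e he
  exact (mul_eq_zero.mp hUD).resolve_right (Polynomial.coe_eq_zero_iff.not.mpr hD)

theorem PowerSeries.mul_eq_trunc_of_trunc_eq_one {V : R⟦X⟧} {D : R[X]} {n : ℕ}
    (hV : trunc n V = 1) (hVD : ∀ e, n ≤ e → coeff e (V * (D : R⟦X⟧)) = 0) :
    V * (D : R⟦X⟧) = trunc n (D : R⟦X⟧) := by
  ext e
  rw [Polynomial.coeff_coe, coeff_trunc]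
  split_ifs with he
  · have := congrArg (Polynomial.coeff · e) (trunc_trunc_mul (n := n) V D)
    simpa [hV, coeff_trunc, he] using this.symm
  · exact hVD e (not_lt.mp he)

theorem PowerSeries.exists_trunc_mul_one_add_X_pow_mul_eq_one {V : R⟦X⟧} {δ κ : ℕ}
    (hV : trunc δ V = 1) (hgap : ∀ i, κ ≤ i → i < δ → coeff (δ + i) V = 0) :
    ∃ P : R[X], P.degree < κ ∧
      trunc (2 * δ) (V * ((1 + Polynomial.X ^ δ * P : R[X]) : R⟦X⟧)) = 1 := by
  rcases Nat.eq_zero_or_pos δ with rfl | hδ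
  · exact ⟨0, by simp, by simpa using hV⟩
  set W : R⟦X⟧ := mk fun i => coeff (i + δ) V
  have hVW : V = X ^ δ * W + 1 := by
    simpa [hV] using eq_X_pow_mul_shift_add_trunc δ V
  obtain ⟨W', hW'⟩ : X ^ δ ∣ W - (trunc κ W : R⟦X⟧) := X_pow_dvd_iff.mpr fun i hi => by
    rw [map_sub, Polynomial.coeff_coe, coeff_trunc]
    split_ifs with hκ
    · exact sub_self _
    · simpa [W, add_comm] using hgap i (not_lt.mp hκ) hi
  refine ⟨-trunc κ W, by simpa using degree_trunc_lt W κ, ?_⟩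
  have hinv : V * ((1 + Polynomial.X ^ δ * -trunc κ W : R[X]) : R⟦X⟧) = 1 + X ^ (2 * δ) *
      (W' * (1 - X ^ δ * (trunc κ W : R⟦X⟧)) - (trunc κ W : R⟦X⟧) ^ 2) := by
    rw [hVW]
    push_cast
    linear_combination (X ^ δ * (1 - X ^ δ * (trunc κ W : R⟦X⟧))) * hW'
  rw [hinv, map_add, trunc_X_pow_self_mul, add_zero, show 2 * δ = 2 * δ - 1 + 1 by omega,
    trunc_one]

/-- `D` factors as `(D mod X ^ δ) * (1 + X ^ δ * P)`, since both sides have degree `< 2 * δ` and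
agree modulo `X ^ (2 * δ)`; comparing degrees then forces `t ≤ P.natDegree`. -/
theorem PowerSeries.exists_mul_one_add_X_pow_mul_eq_one [IsDomain R] {V : R⟦X⟧} {D : R[X]}
    {δ t κ : ℕ} (hD : D ≠ 0) (hDδ : D.natDegree < 2 * δ) (ht : 1 ≤ t) (hκ : κ ≤ t + 1)
    (hV : trunc δ V = 1)
    (hrec : ∀ e, D.natDegree < e + δ + t → coeff e (V * (D : R⟦X⟧)) = 0)
    (hgap : ∀ i, κ ≤ i → i < δ → coeff (δ + i) V = 0) :
    ∃ P : R[X], t ≤ P.natDegree ∧ P.natDegree < κ ∧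
      V * ((1 + Polynomial.X ^ δ * P : R[X]) : R⟦X⟧) = 1 := by
  set T := trunc δ (D : R⟦X⟧)
  have hVD : V * (D : R⟦X⟧) = T :=
    mul_eq_trunc_of_trunc_eq_one hV fun e he => hrec e (by omega)
  have hT0 : T ≠ 0 := by
    rintro hT
    rw [hT, Polynomial.coe_zero, mul_eq_zero, Polynomial.coe_eq_zero_iff] at hVD
    rcases hVD with rfl | rfl
    · simp at hV
    · exact hD rfl
  have hTdeg : T.natDegree + δ + t ≤ D.natDegree := by
    by_contra! h
    apply Polynomial.leadingCoeff_ne_zero.mpr hT0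
    rw [Polynomial.leadingCoeff, ← Polynomial.coeff_coe, ← hVD]
    exact hrec _ (by omega)
  obtain ⟨P, hPκ, hVP⟩ := exists_trunc_mul_one_add_X_pow_mul_eq_one hV hgap
  set Q : R[X] := 1 + Polynomial.X ^ δ * P
  have hPκ' : P.natDegree ≤ κ - 1 := by
    rcases eq_or_ne P 0 with rfl | hP
    · simp
    · have := (Polynomial.natDegree_lt_iff_degree_lt hP).mpr hPκ
      omega
  have hQdeg : Q.natDegree ≤ δ + P.natDegree :=
    (Polynomial.natDegree_add_le _ _).trans <| max_le (by simp) <|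
      Polynomial.natDegree_mul_le.trans (by simp)
  have hTQ : T * Q = D := by
    have hTQdeg : (T * Q).natDegree < 2 * δ := Polynomial.natDegree_mul_le.trans_lt (by omega)
    rw [← trunc_coe_eq_self hTQdeg, ← trunc_coe_eq_self hDδ, Polynomial.coe_mul, ← hVD,
      mul_comm V, mul_assoc, ← trunc_mul_trunc, hVP, Polynomial.coe_one, mul_one]
  have hQ0 : Q ≠ 0 := by
    rintro hQ
    exact hD (by rw [← hTQ, hQ, mul_zero])
  have hdeg : D.natDegree = T.natDegree + Q.natDegree := by
    rw [← hTQ, Polynomial.natDegree_mul hT0 hQ0]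
  refine ⟨P, by omega, by omega, mul_left_cancel₀ (Polynomial.coe_eq_zero_iff.not.mpr hT0) ?_⟩
  rw [mul_one, mul_left_comm, ← Polynomial.coe_mul, hTQ, hVD]

theorem PowerSeries.coeff_mul_succ_eq_neg_coeff_one_pow {V : R⟦X⟧} {P : R[X]} {δ N : ℕ}
    (hδ : δ ≠ 0) (hP : P.natDegree ≤ 1)
    (hVP : V * ((1 + Polynomial.X ^ δ * P : R[X]) : R⟦X⟧) = 1)
    (hz : ∀ h < N, coeff (h * (δ + 1) + 1) V = 0) :
    coeff (N * (δ + 1)) V = (-P.coeff 1) ^ N := by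
  have hVP' : V + C (P.coeff 0) * (X ^ δ * V) + C (P.coeff 1) * (X ^ (δ + 1) * V) = 1 := by
    have hP' : (P : R⟦X⟧) = C (P.coeff 0) + C (P.coeff 1) * X := by
      conv_lhs => rw [Polynomial.eq_X_add_C_of_natDegree_le_one hP]
      push_cast
      ring
    rw [← hVP, Polynomial.coe_add, Polynomial.coe_mul, Polynomial.coe_pow, Polynomial.coe_X,
      Polynomial.coe_one, hP']
    ring
  induction N with
  | zero => simpa [hδ] using congrArg (coeff 0) hVP'
  | succ N ih =>
    have hstep := congrArg (coeff (N * (δ + 1) + 1 + δ)) hVP'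
    simp only [map_add, coeff_C_mul, coeff_X_pow_mul, coeff_one] at hstep
    rw [show N * (δ + 1) + 1 + δ = N * (δ + 1) + (δ + 1) by ring, coeff_X_pow_mul,
      hz N N.lt_succ_self, ih fun h hh => hz h (hh.trans N.lt_succ_self),
      if_neg (by omega)] at hstep
    rw [add_mul, one_mul, pow_succ]
    linear_combination hstep

theorem two_mul_le_natDegree_of_trunc_eq_one [IsDomain R] {V : R⟦X⟧} {D : R[X]}
    {δ t m : ℕ} (hD : D ≠ 0) (ht1 : 1 ≤ t) (ht2 : t < δ)
    (hrec : ∀ e, D.natDegree < e + δ + t → coeff e (V * (D : R⟦X⟧)) = 0)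
    (hV : trunc δ V = 1)
    (hblock : ∀ h ≤ m, ∀ i < δ - 1, coeff (h * (δ + 1) + 1 + i) V = 0)
    (hlast : ∀ i < δ - t, coeff (δ + t + m * (δ + 1) + i) V = 0) :
    2 * δ ≤ D.natDegree := by
  by_contra! hw
  rcases m with _ | m
  · obtain ⟨P, htP, hPt, -⟩ := exists_mul_one_add_X_pow_mul_eq_one (κ := t) hD hw ht1
      (by omega) hV hrec fun i hti hiδ => by simpa [hti] using hlast (i - t) (by omega)
    omega
  · obtain ⟨P, htP, hP2, hVP⟩ := exists_mul_one_add_X_pow_mul_eq_one (κ := 2) hD hw ht1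
      (by omega) hV hrec fun i h2i hiδ => by
        have := hblock 1 (by omega) (i - 2) (by omega)
        rwa [show 1 * (δ + 1) + 1 + (i - 2) = δ + i by omega] at this
    obtain rfl : t = 1 := by omega
    have hP1 : P.coeff 1 ≠ 0 := by
      have := Polynomial.leadingCoeff_ne_zero.mpr (Polynomial.ne_zero_of_natDegree_gt htP)
      rwa [Polynomial.leadingCoeff, show P.natDegree = 1 by omega] at this
    have hpow := coeff_mul_succ_eq_neg_coeff_one_pow (N := m + 2) (by omega) (by omega) hVP
      fun h hh => by simpa using hblock h (by omega) 0 (by omega)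
    rw [show (m + 2) * (δ + 1) = δ + 1 + (m + 1) * (δ + 1) + 0 by ring,
      hlast 0 (by omega)] at hpow
    exact pow_ne_zero _ (neg_ne_zero.mpr hP1) hpow.symm

end PowerSeries

theorem two_mul_le_natDegree_of_coeff_eq_zero {K : Type*} [Field K] {U : K⟦X⟧}
    {D : K[X]} {δ t m : ℕ} (hD : D ≠ 0) (hU : U ≠ 0) (ht1 : 1 ≤ t) (ht2 : t < δ)
    (hrec : ∀ e, D.natDegree ≤ e → coeff e (U * (D : K⟦X⟧)) = 0)
    (hhead : ∀ e < δ + t - 1, coeff e U = 0)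
    (hblock : ∀ h ≤ m, ∀ i < δ - 1, coeff (δ + t + h * (δ + 1) + i) U = 0)
    (hlast : ∀ i < δ - t, coeff (2 * δ + 2 * t + m * (δ + 1) - 1 + i) U = 0) :
    2 * δ ≤ D.natDegree := by
  by_contra! hw
  set s := coeff (δ + t - 1) U
  have hs : s ≠ 0 := by
    intro hs
    refine hU (eq_zero_of_coeff_mul_eq_zero hD hrec fun e he => ?_)
    rcases lt_trichotomy e (δ + t - 1) with h | rfl | h
    · exact hhead e h
    · exact hs
    · have := hblock 0 (Nat.zero_le m) (e - δ - t) (by omega)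
      rwa [show δ + t + 0 * (δ + 1) + (e - δ - t) = e by omega] at this
  obtain ⟨W, hW⟩ := X_pow_dvd_iff.mpr hhead
  have hVU : ∀ j, coeff j (C s⁻¹ * W) = s⁻¹ * coeff (j + (δ + t - 1)) U := fun j => by
    rw [coeff_C_mul, hW, coeff_X_pow_mul]
  refine hw.not_ge <|
    two_mul_le_natDegree_of_trunc_eq_one (V := C s⁻¹ * W) (m := m) hD ht1 ht2 ?_ ?_ ?_ ?_
  · intro e he
    have hUD : coeff (e + (δ + t - 1)) (U * (D : K⟦X⟧)) = coeff e (W * (D : K⟦X⟧)) := by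
      rw [hW, mul_assoc, coeff_X_pow_mul]
    rw [mul_assoc, coeff_C_mul, ← hUD, hrec _ (by omega), mul_zero]
  · ext j
    rw [coeff_trunc, Polynomial.coeff_one, hVU]
    split_ifs with hjδ hj0 hj0
    · rw [hj0, zero_add, inv_mul_cancel₀ hs]
    · have := hblock 0 (Nat.zero_le m) (j - 1) (by omega)
      rw [show j + (δ + t - 1) = δ + t + 0 * (δ + 1) + (j - 1) by omega, this, mul_zero]
    · omega
    · rfl
  · intro h hh i hi
    rw [hVU, show h * (δ + 1) + 1 + i + (δ + t - 1) = δ + t + h * (δ + 1) + i by omega,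
      hblock h hh i hi, mul_zero]
  · intro i hi
    rw [hVU, show δ + t + m * (δ + 1) + i + (δ + t - 1) =
      2 * δ + 2 * t + m * (δ + 1) - 1 + i by omega, hlast i hi, mul_zero]

theorem s_eq_one_bound_generalized_general
    (δ t m : ℕ) (ht1 : 1 ≤ t) (ht2 : t ≤ δ - 1)
    {K : Type*} [Field K] [DecidableEq K] (n : ℕ)
    (ξ : K) (hξ : IsPrimitiveRoot ξ n) (i₀ : ℤ)
    (c : Fin n → K) (hc : c ≠ 0)
    (hzero : ∀ e ∈ (Finset.Icc 0 (δ + t - 2) ∪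
        (Finset.range (m + 1)).biUnion (fun h =>
          Finset.Icc (δ + t + h * (δ + 1)) (δ + t + h * (δ + 1) + δ - 2)) ∪
        Finset.Icc (2 * δ + 2 * t + m * (δ + 1) - 1) (3 * δ + t + m * (δ + 1) - 2)),
      ∑ l : Fin n, c l * ξ ^ ((i₀ + (e : ℤ)) * (l : ℕ)) = 0) :
    2 * δ ≤ hammingNorm c := by
  have hξ0 : ξ ≠ 0 := hξ.ne_zero fun hn => hc (funext fun l => (Fin.cast hn l).elim0)
  set x : Fin n → K := fun l => ξ ^ (l : ℕ)
  set d : Fin n → K := fun l => c l * ξ ^ (i₀ * (l : ℕ))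
  set S : Finset (Fin n) := {l | c l ≠ 0}
  have hS : ∀ e : ℕ, ∑ l ∈ S, d l * x l ^ e = ∑ l, d l * x l ^ e := fun e =>
    Finset.sum_filter_of_ne fun l _ hl => left_ne_zero_of_mul (left_ne_zero_of_mul hl)
  have hsyndrome :
      ∀ e : ℕ, ∑ l, d l * x l ^ e = ∑ l : Fin n, c l * ξ ^ ((i₀ + (e : ℤ)) * (l : ℕ)) :=
    fun e => Finset.sum_congr rfl fun l _ => by
      rw [mul_assoc, ← pow_mul, ← zpow_natCast, ← zpow_add₀ hξ0]
      push_cast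
      ring_nf
  set U : K⟦X⟧ := mk fun e => ∑ l ∈ S, d l * x l ^ e
  have hU : U ≠ 0 := by
    intro hU
    have hd : d = 0 := Matrix.eq_zero_of_forall_pow_sum_mul_pow_eq_zero
      (fun l l' h => Fin.ext (hξ.pow_inj l.isLt l'.isLt h)) fun i => by
        simpa [U, hS] using congrArg (coeff i) hU
    exact hc <| funext fun l =>
      (mul_eq_zero.mp (congrFun hd l)).resolve_right (zpow_ne_zero _ hξ0)
  have hdeg : (errorLocator S x).natDegree = #S :=
    natDegree_errorLocator fun _ _ => pow_ne_zero _ hξ0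
  have hZ : ∀ e ∈ _, coeff e U = 0 := fun e he => by
    rw [coeff_mk, hS, hsyndrome]
    exact hzero e he
  calc 2 * δ ≤ (errorLocator S x).natDegree :=
        two_mul_le_natDegree_of_coeff_eq_zero (m := m) (errorLocator_ne_zero S x) hU ht1 (by omega)
          (fun e he => coeff_mk_sum_mul_pow_mul_errorLocator S x d (hdeg ▸ he))
          (fun e he => hZ e <| mem_union_left _ <| mem_union_left _ <|
            mem_Icc.mpr ⟨by omega, by omega⟩)
          (fun h hh i hi => hZ _ <| mem_union_left _ <| mem_union_right _ <|
            mem_biUnion.mpr ⟨h, mem_range.mpr (by omega), mem_Icc.mpr ⟨by omega, by omega⟩⟩)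
          (fun i hi => hZ _ <| mem_union_right _ <| mem_Icc.mpr ⟨by omega, by omega⟩)
    _ = hammingNorm c := hdeg

/-- Theorem 10 (generalization of the `s = 1` case of the main bound): pattern
`(0)^{δ+t-1}(Δ)^1((0)^{δ-1}(Δ)^2)^m(0)^{δ-1}(Δ)^t(0)^{δ-t}` gives minimum
distance at least `2δ`. -/
theorem s_eq_one_bound_generalized
    (δ t m : ℕ) (hδ : 2 ≤ δ) (ht1 : 1 ≤ t) (ht2 : t ≤ δ - 1)
    {K : Type*} [Field K] [DecidableEq K] (n : ℕ)
    (hn : 3 * δ + t + m * (δ + 1) - 1 ≤ n)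
    (ξ : K) (hξ : IsPrimitiveRoot ξ n) (i₀ : ℤ)
    (c : Fin n → K) (hc : c ≠ 0)
    (hzero : ∀ e ∈ (Finset.Icc 0 (δ + t - 2) ∪
        (Finset.range (m + 1)).biUnion (fun h =>
          Finset.Icc (δ + t + h * (δ + 1)) (δ + t + h * (δ + 1) + δ - 2)) ∪
        Finset.Icc (2 * δ + 2 * t + m * (δ + 1) - 1) (3 * δ + t + m * (δ + 1) - 2)),
      ∑ l : Fin n, c l * ξ ^ ((i₀ + (e : ℤ)) * (l : ℕ)) = 0) :
    2 * δ ≤ hammingNorm c :=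
  s_eq_one_bound_generalized_general δ t m ht1 ht2 n ξ hξ i₀ c hc hzero
end

section
/- Let δ ≥ 2 and n ≥ 2 be integers with (δ+1) | n, and set ρ = n/(δ+1). Let K be a field, ξ ∈ K a primitive n-th root of unity, i₀ an integer, and i₁, i₂ integers with 0 ≤ i₁ < i₂ ≤ n−1. Define L = { (i₀ + i + j(δ+1)) mod n : 1 ≤ i ≤ δ−1, 0 ≤ j ≤ ρ−1 } and D = {i₁, i₂}. Assume L ∩ D = ∅ and i₁ ≢ i₂ (mod δ+1). Then every nonzero vector c : Fin n → K satisfying ∑_{l=0}^{n−1} c_l ξ^{i·l} = 0 for all i ∈ L ∪ D has Hamming weight at least 2δ. -/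
/-!
Write `n = (δ + 1) ρ` and split the coordinates `l = r + ρ t` into `ρ` rows of length `δ + 1`.
Since `L` contains whole cosets `i₀ + i + (δ + 1) ℤ`, a Vandermonde argument in `ξ ^ (δ + 1)`
shows that every row, read as a word over the root `ξ ^ ρ`, vanishes at the `δ - 1` consecutive
frequencies `i₀ + 1, …, i₀ + δ - 1`; by the BCH bound each nonzero row has weight at least `δ`.
If only one row were nonzero, it would moreover vanish at `i₁` and `i₂`, hence at `δ + 1` pairwise
incongruent frequencies, i.e. at every `(δ + 1)`-th root of unity, so it would be zero.
Thus at least two rows are nonzero.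
-/

open Finset

theorem IsPrimitiveRoot.zpow_eq_zpow_iff_modEq {G₀ : Type*} [CommGroupWithZero G₀] {ζ : G₀}
    {k : ℕ} [NeZero k] (h : IsPrimitiveRoot ζ k) {a b : ℤ} : ζ ^ a = ζ ^ b ↔ a ≡ b [ZMOD k] := by
  have hζ : ζ ≠ 0 := h.ne_zero (NeZero.ne k)
  rw [Int.modEq_comm, Int.modEq_iff_dvd, ← h.zpow_eq_one_iff_dvd, zpow_sub₀ hζ,
    div_eq_one_iff_eq (zpow_ne_zero _ hζ)]

theorem Int.exists_add_mul_emod_eq_of_modEq {m ρ : ℕ} (hρ : 0 < ρ) {a : ℤ} {z : ℕ}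
    (hz : z < m * ρ) (h : a ≡ z [ZMOD m]) : ∃ j < ρ, (a + j * m) % ((m * ρ : ℕ) : ℤ) = z := by
  obtain ⟨q, hq⟩ := Int.modEq_iff_dvd.1 h
  have hq₀ : 0 ≤ q % ρ := Int.emod_nonneg q (by omega)
  refine ⟨(q % ρ).toNat, by have := Int.emod_lt_of_pos q (by omega : (0 : ℤ) < ρ); omega, ?_⟩
  have hcong : a + q % ρ * m ≡ a + q * m [ZMOD ρ * m] :=
    ((Int.mod_modEq q ρ).mul_right' (c := (m : ℤ))).add_left a
  rw [Int.toNat_of_nonneg hq₀, Nat.cast_mul, mul_comm (m : ℤ), hcong,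
    show a + q * m = z by linarith]
  exact Int.emod_eq_of_lt (by positivity) (by rw [mul_comm]; exact_mod_cast hz)

section Vandermonde

variable {R ι : Type*} [CommRing R] [IsDomain R] [Fintype ι]

theorem Matrix.eq_zero_of_forall_lt_card_sum_mul_pow_eq_zero {f v : ι → R}
    (hf : Function.Injective f) (h : ∀ k < Fintype.card ι, ∑ j, v j * f j ^ k = 0) : v = 0 := by
  set e := Fintype.equivFin ι
  have hv : v ∘ e.symm = 0 :=
    eq_zero_of_forall_pow_sum_mul_pow_eq_zero (hf.comp e.symm.injective) fun k =>
      (e.symm.sum_comp fun j => v j * f j ^ (k : ℕ)).trans (h k k.isLt)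
  funext j
  simpa using congrFun hv (e j)

theorem Matrix.eq_zero_of_forall_index_sum_mul_pow_eq_zero_of_card_eq {m : ℕ}
    (hcard : Fintype.card ι = m) {f : ι → R} (hf : Function.Injective f) {v : Fin m → R}
    (h : ∀ j, ∑ k, v k * f j ^ (k : ℕ) = 0) : v = 0 :=
  eq_zero_of_forall_index_sum_mul_pow_eq_zero
    (hf.comp (Fintype.equivFinOfCardEq hcard).symm.injective) fun _ => h _

theorem lt_hammingNorm_of_sum_mul_pow_eq_zero [DecidableEq R] {f v : ι → R}
    (hf : Function.Injective f) (hv : v ≠ 0) {d : ℕ} (h : ∀ k < d, ∑ j, v j * f j ^ k = 0) :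
    d < hammingNorm v := by
  by_contra! hd
  set S := ({j | v j ≠ 0} : Finset ι)
  have hS : (fun j : S => v j) = 0 := by
    refine Matrix.eq_zero_of_forall_lt_card_sum_mul_pow_eq_zero (hf.comp Subtype.val_injective)
      fun k hk => ?_
    rw [Function.comp_def, Finset.sum_coe_sort S (fun j => v j * f j ^ k),
      Finset.sum_filter_of_ne fun j _ hj => left_ne_zero_of_mul hj]
    exact h k (hk.trans_le (by simpa [hammingNorm] using hd))
  refine hv (funext fun j => ?_)
  by_contra hj
  exact hj (congrFun hS ⟨j, by simpa [S] using hj⟩)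

end Vandermonde

namespace CyclicCode

variable {K : Type*} [Field K]

/-- The value `c(ξ ^ e)` of the code polynomial `∑ c l X ^ l`. -/
def dft {n : ℕ} (ξ : K) (c : Fin n → K) (e : ℤ) : K :=
  ∑ l : Fin n, c l * ξ ^ (e * (l : ℕ))

/-- Entry `t` of row `r` is the coordinate `r + ρ t` of `c`. -/
def row {m ρ : ℕ} (c : Fin (m * ρ) → K) (r : Fin ρ) : Fin m → K :=
  fun t => c (finProdFinEquiv (t, r))

theorem dft_eq_of_modEq {n : ℕ} [NeZero n] {η : K} (hη : IsPrimitiveRoot η n) (u : Fin n → K)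
    {e e' : ℤ} (h : e ≡ e' [ZMOD n]) : dft η u e = dft η u e' :=
  Finset.sum_congr rfl fun _ _ => by rw [hη.zpow_eq_zpow_iff_modEq.2 (h.mul_right _)]

theorem lt_hammingNorm_of_dft_eq_zero [DecidableEq K] {m : ℕ} {η : K}
    (hη : IsPrimitiveRoot η m) {u : Fin m → K} (hu : u ≠ 0) (a : ℤ) {d : ℕ}
    (h : ∀ k < d, dft η u (a + k) = 0) : d < hammingNorm u := by
  obtain ⟨t₀, -⟩ := Function.ne_iff.1 hu
  have hη0 : η ≠ 0 := hη.ne_zero (Fin.pos t₀).ne'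
  have hshift : hammingNorm (fun t : Fin m => u t * η ^ (a * (t : ℕ))) = hammingNorm u :=
    hammingNorm_comp (fun (t : Fin m) x => x * η ^ (a * (t : ℕ)))
      (fun t => mul_left_injective₀ (zpow_ne_zero _ hη0)) fun _ => zero_mul _
  rw [← hshift]
  refine lt_hammingNorm_of_sum_mul_pow_eq_zero (f := fun t : Fin m => η ^ (t : ℕ))
    (fun s t hst => Fin.ext (hη.pow_inj s.isLt t.isLt hst))
    (hammingNorm_ne_zero_iff.1 (hshift ▸ hammingNorm_ne_zero_iff.2 hu)) fun k hk => ?_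
  rw [← h k hk, dft]
  refine Finset.sum_congr rfl fun t _ => ?_
  rw [mul_assoc, ← pow_mul, ← zpow_natCast, ← zpow_add₀ hη0]
  push_cast
  ring_nf

theorem eq_zero_of_dft_eq_zero {m : ℕ} [NeZero m] {η : K} (hη : IsPrimitiveRoot η m)
    {u : Fin m → K} {ι : Type*} [Fintype ι] (hcard : Fintype.card ι = m) {e : ι → ℤ}
    (he : ∀ i j, e i ≡ e j [ZMOD m] → i = j) (h : ∀ i, dft η u (e i) = 0) : u = 0 := by
  refine Matrix.eq_zero_of_forall_index_sum_mul_pow_eq_zero_of_card_eq hcard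
    (f := fun i => η ^ e i) (fun i j hij => he i j (hη.zpow_eq_zpow_iff_modEq.1 hij))
    fun i => ?_
  rw [← h i, dft]
  simp only [← zpow_natCast, ← zpow_mul]

section Rows

variable {m ρ : ℕ} {ξ : K}

theorem dft_eq_sum_row (hξ : ξ ≠ 0) (c : Fin (m * ρ) → K) (e : ℤ) :
    dft ξ c e = ∑ r : Fin ρ, ξ ^ (e * (r : ℕ)) * dft (ξ ^ ρ) (row c r) e := by
  rw [dft, ← finProdFinEquiv.sum_comp, Fintype.sum_prod_type_right]
  refine Finset.sum_congr rfl fun r _ => ?_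
  rw [dft, Finset.mul_sum]
  refine Finset.sum_congr rfl fun t _ => ?_
  rw [row, ← zpow_natCast ξ ρ, ← zpow_mul, mul_left_comm, ← zpow_add₀ hξ,
    finProdFinEquiv_apply_val]
  push_cast
  ring_nf

theorem hammingNorm_eq_sum_row [DecidableEq K] (c : Fin (m * ρ) → K) :
    hammingNorm c = ∑ r : Fin ρ, hammingNorm (row c r) := by
  simp only [hammingNorm, Finset.card_filter]
  rw [← finProdFinEquiv.sum_comp, Fintype.sum_prod_type_right]
  rfl

theorem hammingNorm_row_add_hammingNorm_row_le [DecidableEq K] (c : Fin (m * ρ) → K)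
    {r₀ r₁ : Fin ρ} (h : r₀ ≠ r₁) :
    hammingNorm (row c r₀) + hammingNorm (row c r₁) ≤ hammingNorm c := by
  rw [← sum_pair h (f := fun r => hammingNorm (row c r)), hammingNorm_eq_sum_row c]
  exact sum_le_sum_of_subset (subset_univ _)

variable [NeZero m] [NeZero ρ]

/-- The frequencies `e + j m` for `j < ρ` separate the rows: `(ξ ^ m) ^ r` are `ρ` distinct
Vandermonde nodes. -/
theorem dft_row_eq_zero (hξ : IsPrimitiveRoot ξ (m * ρ)) (c : Fin (m * ρ) → K) (e : ℤ)
    (h : ∀ j < ρ, dft ξ c (e + j * m) = 0) (r : Fin ρ) : dft (ξ ^ ρ) (row c r) e = 0 := by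
  have hξ0 : ξ ≠ 0 := hξ.ne_zero (NeZero.ne _)
  have hη : IsPrimitiveRoot (ξ ^ ρ) m := hξ.pow (NeZero.pos _) (mul_comm _ _)
  have hζ : IsPrimitiveRoot (ξ ^ m) ρ := hξ.pow (NeZero.pos _) rfl
  have hrows : (fun r : Fin ρ => ξ ^ (e * (r : ℕ)) * dft (ξ ^ ρ) (row c r) e) = 0 := by
    refine Matrix.eq_zero_of_forall_lt_card_sum_mul_pow_eq_zero
      (f := fun r : Fin ρ => (ξ ^ m) ^ (r : ℕ))
      (fun a b hab => Fin.ext (hζ.pow_inj a.isLt b.isLt hab)) fun j hj => ?_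
    rw [Fintype.card_fin] at hj
    rw [← h j hj, dft_eq_sum_row hξ0]
    refine Finset.sum_congr rfl fun r _ => ?_
    have hpow : ξ ^ ((e + j * m) * (r : ℕ)) = ξ ^ (e * (r : ℕ)) * ((ξ ^ m) ^ (r : ℕ)) ^ j := by
      rw [← pow_mul, ← pow_mul, ← zpow_natCast, ← zpow_add₀ hξ0]
      push_cast
      ring_nf
    rw [hpow, dft_eq_of_modEq hη _ (Int.add_mul_emod_self_right e j m)]
    ring
  exact (mul_eq_zero.1 (congrFun hrows r)).resolve_left (zpow_ne_zero _ hξ0)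

theorem lt_hammingNorm_row [DecidableEq K] (hξ : IsPrimitiveRoot ξ (m * ρ))
    {c : Fin (m * ρ) → K} {a : ℤ} {d : ℕ} (h : ∀ k < d, ∀ j < ρ, dft ξ c (a + k + j * m) = 0)
    {r : Fin ρ} (hr : row c r ≠ 0) : d < hammingNorm (row c r) :=
  lt_hammingNorm_of_dft_eq_zero (hξ.pow (NeZero.pos _) (mul_comm _ _)) hr a fun k hk =>
    dft_row_eq_zero hξ c _ (h k hk) r

theorem row_eq_zero_of_dft_eq_zero (hξ : IsPrimitiveRoot ξ (m * ρ)) {c : Fin (m * ρ) → K}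
    {r₀ : Fin ρ} (hc : ∀ r ≠ r₀, row c r = 0) {ι : Type*} [Fintype ι]
    (hcard : Fintype.card ι = m) {e : ι → ℤ} (he : ∀ i j, e i ≡ e j [ZMOD m] → i = j)
    (h : ∀ i, dft ξ c (e i) = 0) : row c r₀ = 0 := by
  have hξ0 : ξ ≠ 0 := hξ.ne_zero (NeZero.ne _)
  refine eq_zero_of_dft_eq_zero (hξ.pow (NeZero.pos _) (mul_comm _ _)) hcard he fun i => ?_
  have hc₀ := h i
  rw [dft_eq_sum_row hξ0, Finset.sum_eq_single r₀ (fun r _ hr => by simp [hc r hr, dft])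
    (by simp)] at hc₀
  exact (mul_eq_zero.1 hc₀).resolve_left (zpow_ne_zero _ hξ0)

theorem exists_ne_row_ne_zero (hξ : IsPrimitiveRoot ξ (m * ρ)) {c : Fin (m * ρ) → K}
    (hc : c ≠ 0) {ι : Type*} [Fintype ι] (hcard : Fintype.card ι = m) {e : ι → ℤ}
    (he : ∀ i j, e i ≡ e j [ZMOD m] → i = j) (h : ∀ i, dft ξ c (e i) = 0) :
    ∃ r₀ r₁, r₀ ≠ r₁ ∧ row c r₀ ≠ 0 ∧ row c r₁ ≠ 0 := by
  obtain ⟨r₀, hr₀⟩ : ∃ r, row c r ≠ 0 := by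
    by_contra! hrows
    refine hc (funext fun l => ?_)
    simpa only [row, Prod.mk.eta, Equiv.apply_symm_apply, Pi.zero_apply] using
      congrFun (hrows (finProdFinEquiv.symm l).2) (finProdFinEquiv.symm l).1
  obtain ⟨r₁, hr₁, hr₁0⟩ : ∃ r ≠ r₀, row c r ≠ 0 := by
    by_contra! hrows
    exact hr₀ (row_eq_zero_of_dft_eq_zero hξ hrows hcard he h)
  exact ⟨r₀, r₁, hr₁.symm, hr₀, hr₁0⟩

theorem two_mul_succ_le_hammingNorm [DecidableEq K] (hξ : IsPrimitiveRoot ξ (m * ρ))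
    {c : Fin (m * ρ) → K} (hc : c ≠ 0) {a : ℤ} {d : ℕ}
    (hloc : ∀ k < d, ∀ j < ρ, dft ξ c (a + k + j * m) = 0) {ι : Type*} [Fintype ι]
    (hcard : d + Fintype.card ι = m) {b : ι → ℤ} (hb : ∀ i i', b i ≡ b i' [ZMOD m] → i = i')
    (hab : ∀ i, ∀ k < d, ¬b i ≡ a + k [ZMOD m]) (hbc : ∀ i, dft ξ c (b i) = 0) :
    2 * (d + 1) ≤ hammingNorm c := by
  set e : Fin d ⊕ ι → ℤ := Sum.elim (fun k => a + (k : ℕ)) b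
  have he : ∀ i j, e i ≡ e j [ZMOD m] → i = j := by
    rintro (k | i) (k' | i') h
    · exact congrArg Sum.inl (Fin.ext (Nat.ModEq.eq_of_lt_of_lt
        (Int.natCast_modEq_iff.1 (h.add_left_cancel' a)) (by omega) (by omega)))
    · exact absurd h.symm (hab i' k k.2)
    · exact absurd h (hab i k' k'.2)
    · rw [hb i i' h]
  have hec : ∀ i, dft ξ c (e i) = 0 := by
    rintro (k | i)
    · simpa [e] using hloc k k.2 0 (NeZero.pos ρ)
    · exact hbc i
  obtain ⟨r₀, r₁, hne, hr₀, hr₁⟩ := exists_ne_row_ne_zero hξ hc (by simp [hcard]) he hec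
  linarith [lt_hammingNorm_row hξ hloc hr₀, lt_hammingNorm_row hξ hloc hr₁,
    hammingNorm_row_add_hammingNorm_row_le c hne]

end Rows

end CyclicCode

open CyclicCode in
/-- Corollary 2: a cyclic code of length `n` with defining set `L ∪ D`, where `L`
is the local-parity part and `D = {i₁, i₂}` with `L ∩ D = ∅` and
`i₁ ≢ i₂ (mod δ+1)`, has minimum distance at least `2δ`. -/
theorem corollary_two_distance_bound
    (δ n : ℕ) (hδ : 2 ≤ δ) (hn : 2 ≤ n) (hdvd : (δ + 1) ∣ n)
    (ρ : ℕ) (hρ : ρ = n / (δ + 1))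
    {K : Type*} [Field K] [DecidableEq K]
    (ξ : K) (hξ : IsPrimitiveRoot ξ n)
    (i₀ : ℤ) (i₁ i₂ : ℕ) (h12 : i₁ < i₂) (h2n : i₂ ≤ n - 1)
    (L : Finset ℤ)
    (hL : L = ((Finset.Icc 1 (δ - 1)) ×ˢ (Finset.range ρ)).image
      (fun p => (i₀ + (p.1 : ℤ) + (p.2 : ℤ) * ((δ : ℤ) + 1)) % (n : ℤ)))
    (hLD : L ∩ ({(i₁ : ℤ), (i₂ : ℤ)} : Finset ℤ) = ∅)
    (hmod : ¬ (i₁ ≡ i₂ [MOD δ + 1])) :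
    ∀ c : Fin n → K, c ≠ 0 →
      (∀ i ∈ L ∪ ({(i₁ : ℤ), (i₂ : ℤ)} : Finset ℤ),
        ∑ l : Fin n, c l * ξ ^ (i * (l : ℕ)) = 0) →
      2 * δ ≤ hammingNorm c := by
  intro c hc hsum
  obtain ⟨k, rfl⟩ := hdvd
  obtain rfl : ρ = k := hρ.trans (Nat.mul_div_cancel_left _ δ.succ_pos)
  have : NeZero ρ := ⟨by rintro rfl; simp at hn⟩
  set b : Fin 2 → ℕ := ![i₁, i₂]
  have hbD : ∀ i, (b i : ℤ) ∈ ({(i₁ : ℤ), (i₂ : ℤ)} : Finset ℤ) := by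
    intro i; fin_cases i <;> simp [b]
  have hL' : ∀ k < δ - 1, ∀ j < ρ, (i₀ + 1 + k + j * (δ + 1 : ℕ)) % ((δ + 1) * ρ : ℕ) ∈ L := by
    intro k hk j hj
    rw [hL]
    exact mem_image.2 ⟨(k + 1, j), by simp [hj]; omega, by push_cast; ring_nf⟩
  have hloc : ∀ k < δ - 1, ∀ j < ρ, dft ξ c (i₀ + 1 + k + j * (δ + 1 : ℕ)) = 0 :=
    fun k hk j hj => (dft_eq_of_modEq hξ c (Int.mod_modEq _ _).symm).trans
      (hsum _ (mem_union_left _ (hL' k hk j hj)))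
  have hb : ∀ i i', (b i : ℤ) ≡ b i' [ZMOD (δ + 1 : ℕ)] → i = i' := by
    intro i i' h
    replace h := Int.natCast_modEq_iff.1 h
    fin_cases i <;> fin_cases i'
    all_goals first | rfl | exact absurd h hmod | exact absurd h.symm hmod
  have hbL : ∀ i, ∀ k < δ - 1, ¬(b i : ℤ) ≡ i₀ + 1 + k [ZMOD (δ + 1 : ℕ)] := by
    intro i k hk h
    obtain ⟨j, hj, hjb⟩ := Int.exists_add_mul_emod_eq_of_modEq (NeZero.pos ρ)
      (by fin_cases i <;> simp [b] <;> omega) h.symm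
    exact eq_empty_iff_forall_notMem.1 hLD _ (mem_inter.2 ⟨hjb ▸ hL' k hk j hj, hbD i⟩)
  have := two_mul_succ_le_hammingNorm hξ hc hloc (by simp; omega) hb hbL
    fun i => hsum _ (mem_union_right _ (hbD i))
  omega
end

section
/- Let F be a finite field with q elements, δ ≥ 2 and ρ ≥ 1 integers, and n = ρ(δ+1). Let C ⊆ F^n be a linear code of dimension k ≥ 1, and let d be the minimum Hamming weight of a nonzero codeword of C. Suppose C has disjoint local repair groups with r = 2: there is a partition of {0,…,n−1} into ρ blocks each of size δ+1 such that for each block S, the punctured code C|_S = {c|_S : c ∈ C} has dimension 2 and every nonzero element of C|_S has Hamming weight at least δ. If d = 2δ+1 and d = n − k − (⌈k/2⌉ − 1)(δ−1) + 1 (i.e., C is Singleton-optimal), then n ≤ q + 1. -/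
/-!
Singleton-optimality with `d = 2δ + 1` forces `k + 2 = 2ρ`. The words whose restriction to every
block lies in the local code form a space `D ⊇ C` of dimension at most `2ρ = k + 2`, so `D / C`
has dimension at most 2. For each coordinate `i`, extend by zero a nonzero local codeword
vanishing at `i`. Its weight is at most `δ < d`, so its class in `D / C` is nonzero. Two such
classes are never proportional: a relation would give a codeword of weight at most `2δ < d`, so
one extended word would be a multiple of the other, and the local codeword of `j` would then
either vanish at two points of its block (impossible in a `[δ + 1, 2, δ]` code) or vanish
identically. Hence the `n`
coordinates give distinct points of the projective line over `F`, which has `q + 1` points.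
-/

open Module Finset Function
open scoped LinearAlgebra.Projectivization

section Hamming

variable {ι β : Type*} [Fintype ι] [DecidableEq β]

theorem hammingNorm_le_card_sub_card [Zero β] {x : ι → β} (s : Finset ι)
    (hs : ∀ i ∈ s, x i = 0) : hammingNorm x ≤ Fintype.card ι - #s := by
  classical
  rw [← card_univ_sdiff]
  exact card_le_card fun i hi => mem_sdiff.mpr
    ⟨mem_univ i, fun his => (mem_filter.mp hi).2 (hs i his)⟩

theorem hammingNorm_sub_le [AddGroup β] (x y : ι → β) :
    hammingNorm (x - y) ≤ hammingNorm x + hammingNorm y := by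
  have hdist : hammingNorm (x - y) = hammingDist x y := by
    simp only [hammingNorm, hammingDist, Pi.sub_apply, ne_eq, sub_eq_zero]
  simpa [hdist] using hammingDist_triangle x 0 y

theorem eq_of_sub_mem_of_hammingNorm_add_lt [AddGroup β] {C : Set (ι → β)} {d : ℕ}
    (hC : ∀ c ∈ C, c ≠ 0 → d ≤ hammingNorm c) {x y : ι → β} (hxy : x - y ∈ C)
    (hlt : hammingNorm x + hammingNorm y < d) : x = y := by
  by_contra hne
  have := hC _ hxy (sub_ne_zero.mpr hne)
  have := hammingNorm_sub_le x y
  omega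

theorem hammingNorm_extend_le [Zero β] {κ : Type*} [Fintype κ] {f : κ → ι}
    (hf : Injective f) (u : κ → β) : hammingNorm (extend f u 0) ≤ hammingNorm u := by
  refine card_le_card_of_surjOn f fun i hi => ?_
  have hi : extend f u 0 i ≠ 0 := (mem_filter.mp hi).2
  by_cases hrange : ∃ p, f p = i
  · obtain ⟨p, rfl⟩ := hrange
    rw [hf.extend_apply] at hi
    exact ⟨p, mem_filter.mpr ⟨mem_univ p, hi⟩, rfl⟩
  · exact absurd (extend_apply' u (0 : ι → β) i hrange) hi

theorem hammingNorm_extend_le_card_sub_one [Zero β] {s : Finset ι} {u : s → β} {p : ι}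
    (hp : p ∈ s) (hup : u ⟨p, hp⟩ = 0) : hammingNorm (extend Subtype.val u 0) ≤ #s - 1 := by
  have := hammingNorm_le_card_sub_card (x := u) {⟨p, hp⟩} (by simpa using hup)
  rw [card_singleton, Fintype.card_coe] at this
  exact (hammingNorm_extend_le Subtype.val_injective u).trans this

end Hamming

theorem Submodule.exists_mem_ne_zero_apply_eq_zero_of_one_lt_finrank {F ι : Type*} [Field F]
    [Finite ι] {L : Submodule F (ι → F)} (hL : 1 < finrank F L) (p : ι) :
    ∃ u ∈ L, u ≠ 0 ∧ u p = 0 := by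
  obtain ⟨u, hu, hu0⟩ := Submodule.exists_mem_ne_zero_of_ne_bot
    (LinearMap.ker_ne_bot_of_finrank_lt (f := (LinearMap.proj p).comp L.subtype)
      (by simpa using hL))
  exact ⟨u, u.2, by simpa using hu0, hu⟩

theorem Submodule.finrank_iInf_comap_le_sum {F β V : Type*} {W : β → Type*} [Field F]
    [Fintype β] [AddCommGroup V] [Module F V] [∀ a, AddCommGroup (W a)] [∀ a, Module F (W a)]
    (f : ∀ a, V →ₗ[F] W a) (hf : ∀ x, (∀ a, f a x = 0) → x = 0)
    (L : ∀ a, Submodule F (W a)) [∀ a, FiniteDimensional F (L a)] :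
    finrank F ↥(⨅ a, (L a).comap (f a)) ≤ ∑ a, finrank F (L a) := by
  let φ : ↥(⨅ a, (L a).comap (f a)) →ₗ[F] ∀ a, L a := LinearMap.pi fun a =>
    ((f a).comp (Submodule.subtype _)).codRestrict (L a) fun x => (Submodule.mem_iInf _).mp x.2 a
  have hφ : Injective φ := by
    refine (injective_iff_map_eq_zero φ).mpr fun x hx => Subtype.ext (hf x fun a => ?_)
    exact congrArg Subtype.val (congrFun hx a)
  simpa [finrank_pi_fintype] using LinearMap.finrank_le_finrank_of_injective hφ

theorem Projectivization.card_le_of_finrank_le_two {F W : Type*} [Field F] [Finite F]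
    [AddCommGroup W] [Module F W] (hW : finrank F W ≤ 2) :
    Nat.card (ℙ F W) ≤ Nat.card F + 1 := by
  rw [card_of_finrank F W rfl]
  calc ∑ i ∈ range (finrank F W), Nat.card F ^ i ≤ ∑ i ∈ range 2, Nat.card F ^ i :=
        sum_le_sum_of_subset (range_subset_range.mpr hW)
    _ = Nat.card F + 1 := by simp [sum_range_succ, add_comm]

theorem card_le_card_add_one_of_sub_smul_mem {F V ι : Type*} [Field F] [Finite F]
    [AddCommGroup V] [Module F V] {C D : Submodule F V} [FiniteDimensional F D] (hCD : C ≤ D)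
    (hD : finrank F D ≤ finrank F C + 2) {v : ι → V} (hvD : ∀ i, v i ∈ D) (hvC : ∀ i, v i ∉ C)
    (hv : ∀ i j (c : F), v j - c • v i ∈ C → i = j) :
    Nat.card ι ≤ Nat.card F + 1 := by
  let K := C.comap D.subtype
  let w i : D ⧸ K := K.mkQ ⟨v i, hvD i⟩
  have hw0 i : w i ≠ 0 := by simpa [w, K, Submodule.Quotient.mk_eq_zero] using hvC i
  have hW : finrank F (D ⧸ K) ≤ 2 := by
    have hK : finrank F K = finrank F C := (Submodule.comapSubtypeEquivOfLe hCD).finrank_eq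
    have := Submodule.finrank_quotient_add_finrank K
    omega
  have hinj : Injective fun i => Projectivization.mk F (w i) (hw0 i) := by
    intro i j hij
    obtain ⟨c, hc⟩ := (Projectivization.mk_eq_mk_iff' F _ _ (hw0 i) (hw0 j)).mp hij
    rw [eq_comm, ← sub_eq_zero, ← map_smul, ← map_sub, Submodule.mkQ_apply,
      Submodule.Quotient.mk_eq_zero] at hc
    exact (hv j i c hc).symm
  have : Finite (D ⧸ K) := Module.finite_of_finite F
  exact (Nat.card_le_card_of_injective _ hinj).trans (Projectivization.card_le_of_finrank_le_two hW)

theorem add_two_eq_two_mul_of_singleton_optimal {δ ρ k : ℕ} (hδ : 2 ≤ δ)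
    (h : (2 * δ + 1 : ℤ) = ρ * (δ + 1) - k - ((((k + 1) / 2 : ℕ) : ℤ) - 1) * (δ - 1) + 1) :
    k + 2 = 2 * ρ := by
  obtain ⟨m, rfl | rfl⟩ := Nat.even_or_odd' k
  · rw [show (2 * m + 1) / 2 = m by omega] at h
    have key : ((ρ : ℤ) - m - 1) * (δ + 1) = 0 := by push_cast at h; linear_combination -h
    rcases mul_eq_zero.mp key with h' | h' <;> omega
  · rw [show (2 * m + 1 + 1) / 2 = m + 1 by omega] at h
    have key : ((ρ : ℤ) - m) * (δ + 1) = 2 * δ + 1 := by push_cast at h; linear_combination -h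
    rcases le_or_gt ((ρ : ℤ) - m) 1 with h' | h' <;> nlinarith

section Puncture

variable {R ι : Type*} [Semiring R]

variable (R) in
def puncture (s : Finset ι) : (ι → R) →ₗ[R] (s → R) :=
  LinearMap.funLeft R R (↑)

@[simp]
theorem puncture_apply (s : Finset ι) (x : ι → R) (p : s) : puncture R s x p = x p := rfl

theorem puncture_extend_self (s : Finset ι) (u : s → R) :
    puncture R s (extend Subtype.val u 0) = u :=
  funext fun p => Subtype.val_injective.extend_apply u 0 p

theorem puncture_extend_of_disjoint {s t : Finset ι} (h : Disjoint s t) (u : s → R) :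
    puncture R t (extend Subtype.val u 0) = 0 :=
  funext fun p => extend_apply' u (0 : ι → R) p.1 fun ⟨q, hq⟩ =>
    disjoint_left.mp h q.2 (hq.symm ▸ p.2)

def blockwiseClosure {β : Type*} (C : Submodule R (ι → R)) (B : β → Finset ι) :
    Submodule R (ι → R) :=
  ⨅ a, (C.map (puncture R (B a))).comap (puncture R (B a))

end Puncture

section Blocks

variable {F ι β : Type*} [Field F] {C : Submodule F (ι → F)} {B : β → Finset ι}

theorem le_blockwiseClosure : C ≤ blockwiseClosure C B :=
  le_iInf fun _ => Submodule.le_comap_map _ _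

theorem finrank_blockwiseClosure_le [Fintype β] [Finite ι] (hB : ∀ i, ∃ a, i ∈ B a) :
    finrank F (blockwiseClosure C B) ≤ ∑ a, finrank F (C.map (puncture F (B a))) :=
  Submodule.finrank_iInf_comap_le_sum _
    (fun _ hx => funext fun i => (hB i).elim fun a ha => congrFun (hx a) ⟨i, ha⟩) _

theorem extend_mem_blockwiseClosure (hB : Pairwise (Disjoint on B)) {a : β} {u : B a → F}
    (hu : u ∈ C.map (puncture F (B a))) : extend Subtype.val u 0 ∈ blockwiseClosure C B := by
  refine Submodule.mem_iInf _ |>.mpr fun b => ?_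
  rcases eq_or_ne a b with rfl | hab
  · rwa [Submodule.mem_comap, puncture_extend_self]
  · rw [Submodule.mem_comap, puncture_extend_of_disjoint (hB hab)]
    exact zero_mem _

theorem extend_ne_smul_extend [DecidableEq F] (hB : Pairwise (Disjoint on B)) {a b : β}
    {p q : ι} (hp : p ∈ B a) (hq : q ∈ B b) (hpq : p ≠ q) {u : B a → F} {w : B b → F}
    (hup : u ⟨p, hp⟩ = 0) (hw0 : w ≠ 0) (hwq : w ⟨q, hq⟩ = 0)
    (hw : #(B b) ≤ hammingNorm w + 1) (c : F) :
    extend Subtype.val w 0 ≠ c • extend Subtype.val u 0 := by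
  classical
  intro h
  have hwu : w = c • puncture F (B b) (extend Subtype.val u 0) := by
    rw [← puncture_extend_self _ w, h, map_smul]
  by_cases hpb : p ∈ B b
  · have hup' : extend Subtype.val u 0 p = 0 :=
      (Subtype.val_injective.extend_apply u 0 ⟨p, hp⟩).trans hup
    have hwp : w ⟨p, hpb⟩ = 0 := by
      rw [hwu, Pi.smul_apply, puncture_apply, hup', smul_zero]
    have hpq' : (⟨p, hpb⟩ : B b) ≠ ⟨q, hq⟩ := fun h => hpq (congrArg Subtype.val h)
    have := hammingNorm_le_card_sub_card (x := w) {⟨p, hpb⟩, ⟨q, hq⟩} (by simp [hwp, hwq])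
    rw [card_pair hpq', Fintype.card_coe] at this
    have := hammingNorm_pos_iff.mpr hw0
    omega
  · have hab : a ≠ b := by rintro rfl; exact hpb hp
    exact hw0 (by rw [hwu, puncture_extend_of_disjoint (hB hab), smul_zero])

theorem card_le_card_add_one_of_blockwise_mds [Finite F] [DecidableEq F] [Fintype ι]
    {δ : ℕ} (hB : Pairwise (Disjoint on B)) (hcover : ∀ i, ∃ a, i ∈ B a)
    (hcard : ∀ a, #(B a) = δ + 1) (hdim : ∀ a, finrank F (C.map (puncture F (B a))) = 2)
    (hmds : ∀ a, ∀ w ∈ C.map (puncture F (B a)), w ≠ 0 → δ ≤ hammingNorm w)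
    (hC : ∀ c ∈ C, c ≠ 0 → 2 * δ + 1 ≤ hammingNorm c)
    (hD : finrank F (blockwiseClosure C B) ≤ finrank F C + 2) :
    Nat.card ι ≤ Nat.card F + 1 := by
  choose A hA using hcover
  choose u huC hu0 hui using fun i =>
    (C.map (puncture F (B (A i)))).exists_mem_ne_zero_apply_eq_zero_of_one_lt_finrank
      (by rw [hdim (A i)]; norm_num) ⟨i, hA i⟩
  set v := fun i => extend Subtype.val (u i) 0
  have hv_norm i : hammingNorm (v i) ≤ δ := by
    have := hammingNorm_extend_le_card_sub_one (hA i) (hui i)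
    rwa [hcard, Nat.add_sub_cancel] at this
  have hvC i : v i ∉ C := fun h => by
    have hv0 : v i = 0 := eq_of_sub_mem_of_hammingNorm_add_lt (y := 0) hC (by simpa using h)
      (by have := hv_norm i; simp; omega)
    exact hu0 i (by rw [← puncture_extend_self _ (u i)]; exact congrArg (puncture F _) hv0)
  have hv i j (c : F) (h : v j - c • v i ∈ C) : i = j := by
    by_contra hij
    refine extend_ne_smul_extend hB (hA i) (hA j) hij (hui i) (hu0 j) (hui j) ?_ c
      (eq_of_sub_mem_of_hammingNorm_add_lt hC h ?_)
    · have := hmds _ _ (huC j) (hu0 j)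
      have := hcard (A j)
      omega
    · show hammingNorm (v j) + hammingNorm (c • v i) < 2 * δ + 1
      have := hv_norm j
      have := (hammingNorm_smul_le_hammingNorm (k := c)).trans (hv_norm i)
      omega
  exact card_le_card_add_one_of_sub_smul_mem le_blockwiseClosure hD
    (fun i => extend_mem_blockwiseClosure hB (huC i)) hvC hv

end Blocks

theorem singleton_optimal_r_two_length_bound_general
    {F : Type*} [Field F] [Fintype F] [DecidableEq F]
    (q δ ρ n : ℕ) (hq : Fintype.card F = q) (hδ : 2 ≤ δ)
    (hn : n = ρ * (δ + 1))
    (C : Submodule F (Fin n → F))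
    (k : ℕ) (hk : k = Module.finrank F ↥C)
    (d : ℕ)
    (hd2 : ∀ c ∈ C, c ≠ 0 → d ≤ hammingNorm c)
    -- disjoint local repair groups with r = 2:
    (B : Fin ρ → Finset (Fin n))
    (hdisj : ∀ a b, a ≠ b → Disjoint (B a) (B b))
    (hcover : ∀ i : Fin n, ∃ a, i ∈ B a)
    (hcard : ∀ a, (B a).card = δ + 1)
    (hdim : ∀ a, Module.finrank F
      ↥(C.map (LinearMap.funLeft F F (fun i : ↥(B a) => (i : Fin n)))) = 2)
    (hmds : ∀ a, ∀ v ∈ C.map (LinearMap.funLeft F F (fun i : ↥(B a) => (i : Fin n))),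
      v ≠ 0 → δ ≤ hammingNorm v)
    (hd3 : d = 2 * δ + 1)
    (hopt : (d : ℤ) = (n : ℤ) - (k : ℤ) -
      ((((k + 1) / 2 : ℕ) : ℤ) - 1) * ((δ : ℤ) - 1) + 1) :
    n ≤ q + 1 := by
  have hdim' : ∀ a, finrank F (C.map (puncture F (B a))) = 2 := hdim
  have hkρ : k + 2 = 2 * ρ :=
    add_two_eq_two_mul_of_singleton_optimal hδ (by subst hn hd3; push_cast at hopt; exact hopt)
  have hD : finrank F (blockwiseClosure C B) ≤ finrank F C + 2 := by
    have := finrank_blockwiseClosure_le (C := C) hcover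
    simp only [hdim', sum_const, card_univ, Fintype.card_fin, smul_eq_mul] at this
    omega
  have := card_le_card_add_one_of_blockwise_mds (fun a b h => hdisj a b h) hcover hcard hdim'
    hmds (fun c hc hc0 => hd3 ▸ hd2 c hc hc0) hD
  simpa [hq] using this

/-- Lemma 8 (Chen et al.): a Singleton-optimal `(2,δ)`-LRC with disjoint local
repair groups and `d = 2δ+1` has length at most `q+1`. -/
theorem singleton_optimal_r_two_length_bound
    {F : Type*} [Field F] [Fintype F] [DecidableEq F]
    (q δ ρ n : ℕ) (hq : Fintype.card F = q) (hδ : 2 ≤ δ) (hρ : 1 ≤ ρ)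
    (hn : n = ρ * (δ + 1))
    (C : Submodule F (Fin n → F))
    (k : ℕ) (hk : k = Module.finrank F ↥C) (hk1 : 1 ≤ k)
    (d : ℕ)
    (hd1 : ∃ c ∈ C, c ≠ 0 ∧ hammingNorm c = d)
    (hd2 : ∀ c ∈ C, c ≠ 0 → d ≤ hammingNorm c)
    -- disjoint local repair groups with r = 2:
    (B : Fin ρ → Finset (Fin n))
    (hdisj : ∀ a b, a ≠ b → Disjoint (B a) (B b))
    (hcover : ∀ i : Fin n, ∃ a, i ∈ B a)
    (hcard : ∀ a, (B a).card = δ + 1)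
    (hdim : ∀ a, Module.finrank F
      ↥(C.map (LinearMap.funLeft F F (fun i : ↥(B a) => (i : Fin n)))) = 2)
    (hmds : ∀ a, ∀ v ∈ C.map (LinearMap.funLeft F F (fun i : ↥(B a) => (i : Fin n))),
      v ≠ 0 → δ ≤ hammingNorm v)
    (hd3 : d = 2 * δ + 1)
    (hopt : (d : ℤ) = (n : ℤ) - (k : ℤ) -
      ((((k + 1) / 2 : ℕ) : ℤ) - 1) * ((δ : ℤ) - 1) + 1) :
    n ≤ q + 1 :=
  singleton_optimal_r_two_length_bound_general q δ ρ n hq hδ hn C k hk d hd2 B hdisj hcover hcard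
    hdim hmds hd3 hopt
end

section
/- Let q be a prime power, F the finite field with q elements, and δ ≥ 3 an odd integer with (δ+1) | (q+1) (so q is odd). Let ρ be a positive integer with gcd(ρ, δ+1) = 1 and gcd(ρ, q) = 1, set n = ρ(δ+1), and assume n > q + 1. Then there exists a linear code C ⊆ F^n of dimension 2ρ − 2 whose minimum Hamming distance (the minimum Hamming weight of a nonzero codeword) is exactly 2δ, and which has (2,δ)-locality. -/
open Finset

section Hamming

variable {β : Type*} [Zero β] [DecidableEq β]

theorem card_le_hammingNorm_add_one_of_injective {ι : Type*} [Fintype ι] {f : ι → β}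
    (hf : Function.Injective f) : Fintype.card ι ≤ hammingNorm f + 1 := by
  have hzeros : #{i | f i = 0} ≤ 1 :=
    card_le_one.mpr fun i hi j hj => hf <| (mem_filter.mp hi).2.trans (mem_filter.mp hj).2.symm
  have hsplit := card_filter_add_card_filter_not (s := univ) (fun i => f i ≠ 0)
  simp only [not_not, card_univ] at hsplit
  rw [hammingNorm]
  omega

theorem hammingNorm_const {ι : Type*} [Fintype ι] {b : β} (hb : b ≠ 0) :
    hammingNorm (fun _ : ι => b) = Fintype.card ι := by
  simp [hammingNorm, hb]

theorem hammingNorm_snoc {n : ℕ} (f : Fin n → β) (b : β) :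
    hammingNorm (Fin.snoc f b : Fin (n + 1) → β) = hammingNorm f + if b = 0 then 0 else 1 := by
  simp only [hammingNorm, card_filter, Fin.sum_univ_castSucc, Fin.snoc_castSucc, Fin.snoc_last,
    ite_not]

theorem hammingNorm_uncurry {κ ι : Type*} [Fintype κ] [Fintype ι]
    (w : κ → ι → β) : hammingNorm (Function.uncurry w) = ∑ k, hammingNorm (w k) := by
  simp only [hammingNorm, card_filter, Fintype.sum_prod_type]
  rfl

theorem hammingNorm_comp_equiv {ι ι' : Type*} [Fintype ι] [Fintype ι'] (e : ι' ≃ ι)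
    (f : ι → β) : hammingNorm (f ∘ e) = hammingNorm f := by
  simp only [hammingNorm, card_filter]
  exact Fintype.sum_equiv e _ _ fun _ => rfl

end Hamming

section LineEvaluation

variable {F : Type*} [Field F] {δ : ℕ} (pts : Fin δ → F)

/-- Evaluation of `a + b X` at the points `pts` and at infinity, where its value is `b`. -/
def lineEval : F × F →ₗ[F] Fin (δ + 1) → F where
  toFun x := Fin.snoc (fun i => x.1 + x.2 * pts i) x.2
  map_add' x y := by
    ext i
    refine Fin.lastCases ?_ (fun i => ?_) i
    · simp
    · simp only [Fin.snoc_castSucc, Prod.fst_add, Prod.snd_add, Pi.add_apply]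
      ring
  map_smul' c x := by
    ext i
    refine Fin.lastCases ?_ (fun i => ?_) i
    · simp
    · simp only [Fin.snoc_castSucc, Prod.smul_fst, Prod.smul_snd, Pi.smul_apply, smul_eq_mul,
        RingHom.id_apply]
      ring

theorem lineEval_apply (x : F × F) :
    lineEval pts x = Fin.snoc (fun i => x.1 + x.2 * pts i) x.2 := rfl

theorem lineEval_injective (hδ : 0 < δ) : Function.Injective (lineEval pts) := by
  rw [← LinearMap.ker_eq_bot, LinearMap.ker_eq_bot']
  rintro ⟨a, b⟩ h
  have hb : b = 0 := by simpa [lineEval_apply] using congrFun h (Fin.last δ)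
  have ha : a = 0 := by
    have h0 := congrFun h (Fin.castSucc ⟨0, hδ⟩)
    rw [lineEval_apply, Fin.snoc_castSucc] at h0
    simpa [hb] using h0
  simp [ha, hb]

variable [DecidableEq F]

theorem le_hammingNorm_lineEval (hpts : Function.Injective pts) {x : F × F} (hx : x ≠ 0) :
    δ ≤ hammingNorm (lineEval pts x) := by
  obtain ⟨a, b⟩ := x
  rw [lineEval_apply, hammingNorm_snoc]
  by_cases hb : b = 0
  · have ha : a ≠ 0 := by rintro rfl; exact hx (by simp [hb])
    simp [hb, hammingNorm_const ha]
  · have hinj : Function.Injective fun i => a + b * pts i :=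
      (add_right_injective a).comp ((mul_right_injective₀ hb).comp hpts)
    simpa [hb] using card_le_hammingNorm_add_one_of_injective hinj

theorem hammingNorm_lineEval_of_snd_eq_zero {a : F} (ha : a ≠ 0) :
    hammingNorm (lineEval pts (a, 0)) = δ := by
  simp [lineEval_apply, hammingNorm_snoc, hammingNorm_const ha]

end LineEvaluation

section Blocks

variable {R M : Type*} [Semiring R] [AddCommMonoid M] [Module R M] {ρ m : ℕ}

/-- Block `k` of the concatenation occupies the positions `k * m, …, k * m + m - 1`. -/
def concatBlocks : (Fin ρ → Fin m → M) ≃ₗ[R] (Fin (ρ * m) → M) :=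
  (LinearEquiv.curry R M (Fin ρ) (Fin m)).symm ≪≫ₗ
    LinearEquiv.funCongrLeft R M finProdFinEquiv.symm

theorem concatBlocks_apply_finProdFinEquiv (w : Fin ρ → Fin m → M) (k : Fin ρ) (j : Fin m) :
    concatBlocks (R := R) w (finProdFinEquiv (k, j)) = w k j := by
  simp [concatBlocks, LinearEquiv.funCongrLeft_apply]

theorem hammingNorm_concatBlocks [DecidableEq M] (w : Fin ρ → Fin m → M) :
    hammingNorm (concatBlocks (R := R) w) = ∑ k, hammingNorm (w k) := by
  rw [← hammingNorm_uncurry]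
  exact hammingNorm_comp_equiv finProdFinEquiv.symm (Function.uncurry w)

end Blocks

theorem hasRDeltaLocality_concatBlocks {F : Type*} [Field F] [DecidableEq F] {ρ m r δ : ℕ}
    {D : Set (Fin ρ → Fin m → F)} (hm : m ≤ r + δ - 1)
    (hD : ∀ w ∈ D, ∀ k, w k ≠ 0 → δ ≤ hammingNorm (w k)) :
    HasRDeltaLocality (concatBlocks (R := F) '' D) r δ := by
  intro ℓ
  obtain ⟨⟨k, j⟩, rfl⟩ := finProdFinEquiv.surjective ℓ
  let blockPos : Fin m ↪ Fin (ρ * m) :=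
    ⟨fun j => finProdFinEquiv (k, j),
      finProdFinEquiv.injective.comp (Prod.mk_right_injective k)⟩
  refine ⟨univ.map blockPos, mem_map_of_mem _ (mem_univ j), by simpa using hm, ?_⟩
  rintro _ ⟨w, hw, rfl⟩ ⟨_, hi, hne⟩
  obtain ⟨j', -, rfl⟩ := mem_map.mp hi
  rw [filter_map, card_map]
  have hblock (i : Fin m) : concatBlocks (R := F) w (blockPos i) = w k i :=
    concatBlocks_apply_finProdFinEquiv w k i
  simp only [Function.comp_def, hblock] at hne ⊢
  exact hD w hw k fun h => hne (by simp [h])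

section ZeroSum

variable (R : Type*) {M : Type*} [Semiring R] [AddCommMonoid M] [Module R M] (ι : Type*)
  [Fintype ι]

def zeroSumSubmodule : Submodule R (ι → M) :=
  LinearMap.ker (∑ i, LinearMap.proj i)

variable {R ι}

theorem mem_zeroSumSubmodule {x : ι → M} : x ∈ zeroSumSubmodule R ι ↔ ∑ i, x i = 0 := by
  simp [zeroSumSubmodule]

theorem finrank_zeroSumSubmodule {K V : Type*} [Field K] [AddCommGroup V] [Module K V]
    [FiniteDimensional K V] [Nonempty ι] :
    Module.finrank K (zeroSumSubmodule K ι : Submodule K (ι → V)) =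
      Fintype.card ι * Module.finrank K V - Module.finrank K V := by
  classical
  obtain ⟨i₀⟩ := ‹Nonempty ι›
  have hsurj : LinearMap.range (∑ i, LinearMap.proj i : (ι → V) →ₗ[K] V) = ⊤ :=
    LinearMap.range_eq_top.mpr fun y => ⟨Pi.single i₀ y, by simp⟩
  have := LinearMap.finrank_range_add_finrank_ker (∑ i, LinearMap.proj i : (ι → V) →ₗ[K] V)
  rw [hsurj, finrank_top, Module.finrank_pi_fintype, sum_const, card_univ, smul_eq_mul] at this
  rw [zeroSumSubmodule]
  omega

theorem exists_ne_ne_zero_of_sum_eq_zero {x : ι → M} (hsum : ∑ i, x i = 0) (hx : x ≠ 0) :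
    ∃ i j, i ≠ j ∧ x i ≠ 0 ∧ x j ≠ 0 := by
  obtain ⟨i, hi⟩ := Function.ne_iff.mp hx
  by_contra! h
  exact hi (by rwa [Fintype.sum_eq_single i fun j hj => h i j hj.symm hi] at hsum)

end ZeroSum

section LineBlockCode

variable {F : Type*} [Field F] {δ : ℕ} (pts : Fin δ → F) (ρ : ℕ)

def lineBlockCode : Submodule F (Fin (ρ * (δ + 1)) → F) :=
  ((zeroSumSubmodule F (Fin ρ)).map ((lineEval pts).compLeft (Fin ρ))).map
    (concatBlocks (R := F)).toLinearMap

variable {pts ρ}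

theorem mem_lineBlockCode {c : Fin (ρ * (δ + 1)) → F} :
    c ∈ lineBlockCode pts ρ ↔
      ∃ x : Fin ρ → F × F,
        ∑ k, x k = 0 ∧ concatBlocks (R := F) (fun k => lineEval pts (x k)) = c := by
  simp only [lineBlockCode, Submodule.mem_map, mem_zeroSumSubmodule, LinearEquiv.coe_coe,
    exists_exists_and_eq_and]
  rfl

theorem finrank_lineBlockCode (hδ : 0 < δ) (hρ : 0 < ρ) :
    Module.finrank F (lineBlockCode pts ρ) = 2 * ρ - 2 := by
  have : Nonempty (Fin ρ) := ⟨⟨0, hρ⟩⟩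
  have hinj : Function.Injective ((lineEval pts).compLeft (Fin ρ)) :=
    (lineEval_injective pts hδ).comp_left
  rw [lineBlockCode, LinearEquiv.finrank_map_eq,
    ← (Submodule.equivMapOfInjective _ hinj _).finrank_eq, finrank_zeroSumSubmodule,
    Module.finrank_prod, Module.finrank_self, Fintype.card_fin]
  omega

variable [DecidableEq F]

theorem two_mul_le_hammingNorm_of_mem_lineBlockCode (hpts : Function.Injective pts)
    {c : Fin (ρ * (δ + 1)) → F} (hc : c ∈ lineBlockCode pts ρ) (hc0 : c ≠ 0) :
    2 * δ ≤ hammingNorm c := by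
  obtain ⟨x, hsum, rfl⟩ := mem_lineBlockCode.mp hc
  have hx : x ≠ 0 := by
    rintro rfl
    simp only [Pi.zero_apply, map_zero] at hc0
    exact hc0 (map_zero _)
  obtain ⟨i, j, hij, hi, hj⟩ := exists_ne_ne_zero_of_sum_eq_zero hsum hx
  calc 2 * δ ≤ hammingNorm (lineEval pts (x i)) + hammingNorm (lineEval pts (x j)) := by
        linarith [le_hammingNorm_lineEval pts hpts hi, le_hammingNorm_lineEval pts hpts hj]
    _ ≤ hammingNorm (concatBlocks (R := F) fun k => lineEval pts (x k)) := by
        rw [hammingNorm_concatBlocks]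
        exact add_le_sum (f := fun k => hammingNorm (lineEval pts (x k)))
          (fun _ _ => Nat.zero_le _) (mem_univ i) (mem_univ j) hij

theorem exists_mem_lineBlockCode_hammingNorm_eq (hδ : 0 < δ) (hρ : 2 ≤ ρ) :
    ∃ c ∈ lineBlockCode pts ρ, c ≠ 0 ∧ hammingNorm c = 2 * δ := by
  let i : Fin ρ := ⟨0, by omega⟩
  let j : Fin ρ := ⟨1, hρ⟩
  have hij : i ≠ j := by simp [i, j, Fin.ext_iff]
  let x : Fin ρ → F × F := Pi.single i (1, 0) - Pi.single j (1, 0)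
  have hweight : hammingNorm (concatBlocks (R := F) fun k => lineEval pts (x k)) = 2 * δ := by
    rw [hammingNorm_concatBlocks, Fintype.sum_eq_add i j hij]
    · simp [x, hij, hij.symm, hammingNorm_lineEval_of_snd_eq_zero]
      omega
    · rintro k ⟨hki, hkj⟩
      simp [x, hki, hkj]
  refine ⟨_, mem_lineBlockCode.mpr ⟨x, by simp [x], rfl⟩, ?_, hweight⟩
  rw [← hammingNorm_pos_iff, hweight]
  omega

theorem hasRDeltaLocality_lineBlockCode (hpts : Function.Injective pts) :
    HasRDeltaLocality (lineBlockCode pts ρ : Set (Fin (ρ * (δ + 1)) → F)) 2 δ := by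
  rw [lineBlockCode, Submodule.map_coe]
  refine hasRDeltaLocality_concatBlocks (by omega) ?_
  rintro _ ⟨x, -, rfl⟩ k hk
  exact le_hammingNorm_lineEval pts hpts fun h => hk (by simp [h])

end LineBlockCode

theorem distance_optimal_lrc_q_add_one_odd_general
    {F : Type*} [Field F] [Fintype F] [DecidableEq F] (q : ℕ)
    (hq : Fintype.card F = q)
    (δ : ℕ) (hδ : 3 ≤ δ) (hdvd : (δ + 1) ∣ (q + 1))
    (ρ : ℕ)
    (n : ℕ) (hn : n = ρ * (δ + 1)) (hbig : q + 1 < n) :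
    ∃ C : Submodule F (Fin n → F),
      Module.finrank F ↥C = 2 * ρ - 2 ∧
      (∀ c ∈ C, c ≠ 0 → 2 * δ ≤ hammingNorm c) ∧
      (∃ c ∈ C, c ≠ 0 ∧ hammingNorm c = 2 * δ) ∧
      HasRDeltaLocality (C : Set (Fin n → F)) 2 δ := by
  subst hn
  have hδq : δ ≤ q := Nat.le_of_lt_succ (Nat.le_of_dvd q.succ_pos hdvd)
  have hρ : 2 ≤ ρ := by
    by_contra! hρ
    have : ρ * (δ + 1) ≤ 1 * (δ + 1) := Nat.mul_le_mul_right _ (by omega)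
    omega
  obtain ⟨pts⟩ : Nonempty (Fin δ ↪ F) :=
    Function.Embedding.nonempty_of_card_le (by simpa [hq] using hδq)
  exact ⟨lineBlockCode pts ρ, finrank_lineBlockCode (by omega) (by omega),
    fun _ hc hc0 => two_mul_le_hammingNorm_of_mem_lineBlockCode pts.injective hc hc0,
    exists_mem_lineBlockCode_hammingNorm_eq (by omega) hρ,
    hasRDeltaLocality_lineBlockCode pts.injective⟩

/-- Theorem 13: for `δ` odd with `(δ+1) ∣ (q+1)` there is a distance-optimal `(2,δ)`-LRC with
parameters `[n, 2ρ-2, 2δ]_q`, where `n = ρ(δ+1)` is unbounded. -/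
theorem distance_optimal_lrc_q_add_one_odd
    {F : Type*} [Field F] [Fintype F] [DecidableEq F] (q : ℕ)
    (hq : Fintype.card F = q)
    (δ : ℕ) (hδ : 3 ≤ δ) (hOdd : Odd δ) (hdvd : (δ + 1) ∣ (q + 1))
    (ρ : ℕ) (hρ : 0 < ρ) (hcop1 : Nat.Coprime ρ (δ + 1)) (hcop2 : Nat.Coprime ρ q)
    (n : ℕ) (hn : n = ρ * (δ + 1)) (hbig : q + 1 < n) :
    ∃ C : Submodule F (Fin n → F),
      Module.finrank F ↥C = 2 * ρ - 2 ∧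
      (∀ c ∈ C, c ≠ 0 → 2 * δ ≤ hammingNorm c) ∧
      (∃ c ∈ C, c ≠ 0 ∧ hammingNorm c = 2 * δ) ∧
      HasRDeltaLocality (C : Set (Fin n → F)) 2 δ :=
  distance_optimal_lrc_q_add_one_odd_general q hq δ hδ hdvd ρ n hn hbig
end
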